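/- arXiv:1310.5743 — 5 statements merged into one kernel-verified Lean document; each statement's English description precedes it below -/
import Mathlib

section
/- Let n_b ≥ 1, let 2 ≤ n_t ≤ n_b + 1, and let 1 ≤ m ≤ n_b + 1. The number of permutations σ of {1,…,n_b} whose score statistic at threshold n_t equals m − 1 is n_b! · (1+n_b) · Σ_{k=0}^{m−1} (−1)^k (1+n_b−n_t+m−k)^{n_t−1} · (n_b−n_t+m−k)! / ( k! · (1+n_b−k)! · (m−k−1)! ), as an identity of rational numbers. Equivalently, in the 2-race regatta model with n_b boats whose ranks in each race form a uniformly random permutation of {1,…,n_b}, the probability P_{n_t}(m) that exactly m−1 boats have total score (sum of ranks in the two races) strictly less than n_t equals (1+n_b) · Σ_{k=0}^{m−1} (−1)^k (1+n_b−n_t+m−k)^{n_t−1} (n_b−n_t+m−k)! / ( k! (1+n_b−k)! (m−k−1)! ). -/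
open scoped Nat

/-- The score statistic of a permutation `σ` of `{1,…,n}` at threshold `t`: the number of
indices `i ∈ {1,…,n}` with `i + σ(i) < t`.  Here `{1,…,n}` is encoded by `Fin n`, the index
being `(i : ℕ) + 1` and its image `(σ i : ℕ) + 1`. -/
def scoreStat (n t : ℕ) (σ : Equiv.Perm (Fin n)) : ℕ :=
  (Finset.univ.filter fun i : Fin n => (i : ℕ) + 1 + ((σ i : ℕ) + 1) < t).card

open Finset




lemma EXT0 {M : ℕ} (Q : Finset (Fin M × Fin M))
    (h1 : ∀ p ∈ Q, ∀ q ∈ Q, p.1 = q.1 → p = q)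
    (h2 : ∀ p ∈ Q, ∀ q ∈ Q, p.2 = q.2 → p = q) :
    (univ.filter (fun σ : Equiv.Perm (Fin M) => ∀ p ∈ Q, σ p.1 = p.2)).card
      = (M - Q.card)! := by
  classical
  set A : Finset (Fin M) := Q.image Prod.fst with hA
  set B : Finset (Fin M) := Q.image Prod.snd with hB
  have hcardA : A.card = Q.card := by
    rw [hA]; apply Finset.card_image_of_injOn; intro p hp q hq h; exact h1 p hp q hq h
  have hcardB : B.card = Q.card := by
    rw [hB]; apply Finset.card_image_of_injOn; intro p hp q hq h; exact h2 p hp q hq h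
  have hexu : ∀ (x : Fin M), x ∈ A → ∃! p, p ∈ Q ∧ p.1 = x := by
    intro x hx
    rw [hA, Finset.mem_image] at hx
    obtain ⟨p, hp, hpx⟩ := hx
    exact ⟨p, ⟨hp, hpx⟩, fun q hq => h1 q hq.1 p hp (by rw [hq.2, hpx])⟩
  set cho : ∀ (x : Fin M), x ∈ A → Fin M × Fin M :=
    fun x hx => Q.choose (fun p => p.1 = x) (hexu x hx) with hcho
  have cho_mem : ∀ (x : Fin M) (hx : x ∈ A), cho x hx ∈ Q :=
    fun x hx => Finset.choose_mem (fun p => p.1 = x) Q (hexu x hx)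
  have cho_fst : ∀ (x : Fin M) (hx : x ∈ A), (cho x hx).1 = x :=
    fun x hx => Finset.choose_property (fun p => p.1 = x) Q (hexu x hx)
  have cho_eq : ∀ (x : Fin M) (hx : x ∈ A) (p : Fin M × Fin M), p ∈ Q → p.1 = x →
      cho x hx = p := by
    intro x hx p hp hpx
    exact h1 _ (cho_mem x hx) p hp (by rw [cho_fst x hx, hpx])
  set g : {x // x ∈ A} → {x // x ∈ B} :=
    fun a => ⟨(cho a.1 a.2).2, by rw [hB]; exact Finset.mem_image_of_mem _ (cho_mem a.1 a.2)⟩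
    with hg
  have gbij : Function.Bijective g := by
    constructor
    · rintro ⟨x, hx⟩ ⟨y, hy⟩ hxy
      simp only [hg, Subtype.mk.injEq] at hxy
      have heq := h2 _ (cho_mem x hx) _ (cho_mem y hy) hxy
      exact Subtype.ext ((cho_fst x hx).symm.trans
        ((congrArg Prod.fst heq).trans (cho_fst y hy)))
    · rintro ⟨y, hy⟩
      rw [hB, Finset.mem_image] at hy
      obtain ⟨p, hp, hpy⟩ := hy
      have hpA : p.1 ∈ A := by rw [hA]; exact Finset.mem_image_of_mem _ hp
      refine ⟨⟨p.1, hpA⟩, ?_⟩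
      apply Subtype.ext
      simp only [hg]
      rw [cho_eq p.1 hpA p hp rfl, hpy]
  set gE : {x // x ∈ A} ≃ {x // x ∈ B} := Equiv.ofBijective g gbij with hgE
  have gE_apply : ∀ (x : Fin M) (hx : x ∈ A), (gE ⟨x, hx⟩ : Fin M) = (cho x hx).2 :=
    fun x hx => rfl
  have key : ∀ σ : Equiv.Perm (Fin M), (∀ p ∈ Q, σ p.1 = p.2) ↔
      (∀ (x : Fin M) (hx : x ∈ A), σ x = (gE ⟨x, hx⟩ : Fin M)) := by
    intro σ
    constructor
    · intro h x hx
      have h3 : σ (cho x hx).1 = (cho x hx).2 := h _ (cho_mem x hx)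
      rw [cho_fst x hx] at h3
      rw [gE_apply]
      exact h3
    · intro h p hp
      have hpA : p.1 ∈ A := by rw [hA]; exact Finset.mem_image_of_mem _ hp
      have h4 := h p.1 hpA
      rw [gE_apply, cho_eq p.1 hpA p hp rfl] at h4
      exact h4
  have memiff : ∀ (σ : Equiv.Perm (Fin M)), (∀ p ∈ Q, σ p.1 = p.2) →
      ∀ x : Fin M, x ∈ A ↔ σ x ∈ B := by
    intro σ hσ x
    constructor
    · intro hx
      rw [(key σ).1 hσ x hx]
      exact (gE ⟨x, hx⟩).2
    · intro hx
      rw [hB, Finset.mem_image] at hx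
      obtain ⟨p, hp, hpx⟩ := hx
      have h5 : σ p.1 = σ x := by rw [hσ p hp, hpx]
      have h6 := σ.injective h5
      rw [← h6, hA]
      exact Finset.mem_image_of_mem _ hp
  have main : Fintype.card {σ : Equiv.Perm (Fin M) // ∀ p ∈ Q, σ p.1 = p.2}
      = Fintype.card ({x // ¬ x ∈ A} ≃ {x // ¬ x ∈ B}) := by
    apply Fintype.card_congr
    refine
      { toFun := fun σ => Equiv.subtypeEquiv σ.1 (fun x => not_congr ((memiff σ.1 σ.2 x)))
        invFun := fun e => ⟨Equiv.subtypeCongr gE e, ?_⟩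
        left_inv := ?_
        right_inv := ?_ }
    · rw [key]
      intro x hx
      simp [Equiv.subtypeCongr, Equiv.sumCompl_symm_apply_of_pos hx]
    · rintro ⟨σ, hσ⟩
      apply Subtype.ext
      apply Equiv.ext
      intro x
      by_cases hx : x ∈ A
      · simp only [Equiv.subtypeCongr, Equiv.trans_apply,
          Equiv.sumCompl_symm_apply_of_pos hx, Equiv.sumCongr_apply, Sum.map_inl,
          Equiv.sumCompl_apply_inl]
        exact ((key σ).1 hσ x hx).symm
      · simp only [Equiv.subtypeCongr, Equiv.trans_apply,
          Equiv.sumCompl_symm_apply_of_neg hx, Equiv.sumCongr_apply, Sum.map_inr,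
          Equiv.sumCompl_apply_inr, Equiv.subtypeEquiv_apply]
    · intro e
      apply Equiv.ext
      rintro ⟨x, hx⟩
      apply Subtype.ext
      simp only [Equiv.subtypeEquiv_apply, Equiv.subtypeCongr, Equiv.trans_apply,
        Equiv.sumCompl_symm_apply_of_neg hx, Equiv.sumCongr_apply, Sum.map_inr,
        Equiv.sumCompl_apply_inr]
  have hcount : (univ.filter (fun σ : Equiv.Perm (Fin M) => ∀ p ∈ Q, σ p.1 = p.2)).card
      = Fintype.card {σ : Equiv.Perm (Fin M) // ∀ p ∈ Q, σ p.1 = p.2} := by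
    rw [Fintype.card_subtype]
  rw [hcount, main]
  have c1 : Fintype.card {x // ¬ x ∈ A} = M - Q.card := by
    rw [Fintype.card_subtype_compl]
    simp [hcardA]
  have c2 : Fintype.card {x // ¬ x ∈ B} = M - Q.card := by
    rw [Fintype.card_subtype_compl]
    simp [hcardB]
  have e0 : {x // ¬ x ∈ A} ≃ {x // ¬ x ∈ B} := Fintype.equivOfCardEq (by rw [c1, c2])
  rw [Fintype.card_equiv e0, c1]




lemma DELTA (s h r : ℕ) (hh : h ≤ s) :
    ∑ k ∈ range (s+1), (-1:ℚ)^k * (h.choose k) * (k.choose r)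
      = (-1)^r * (if h = r then 1 else 0) := by
  by_cases hrh : r ≤ h
  · have e1 : ∑ k ∈ range (s+1), (-1:ℚ)^k * (h.choose k) * (k.choose r)
        = ∑ k ∈ Ico r (h+1), (-1:ℚ)^k * (h.choose k) * (k.choose r) := by
      rw [eq_comm]
      apply Finset.sum_subset
      · intro k hk; rw [mem_Ico] at hk; rw [mem_range]; omega
      · intro k hk hk2
        rw [mem_range] at hk; rw [mem_Ico] at hk2
        rcases Nat.lt_or_ge k r with h1 | h1
        · rw [Nat.choose_eq_zero_of_lt h1]; simp
        · have : h < k := by omega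
          rw [Nat.choose_eq_zero_of_lt this]; simp
    rw [e1, Finset.sum_Ico_eq_sum_range]
    have hr1 : h + 1 - r = (h - r) + 1 := by omega
    rw [hr1]
    have e2 : ∀ i ∈ range ((h-r)+1),
        (-1:ℚ)^(r+i) * (h.choose (r+i)) * ((r+i).choose r)
        = ((-1:ℚ)^r * (h.choose r)) * ((-1:ℚ)^i * ((h-r).choose i)) := by
      intro i hi
      rw [mem_range] at hi
      have hmul : h.choose (r+i) * (r+i).choose r = h.choose r * (h-r).choose i := by
        have := Nat.choose_mul (n := h) (show r ≤ r + i by omega)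
        simpa [Nat.add_sub_cancel_left] using this
      have : ((h.choose (r+i) : ℚ)) * ((r+i).choose r) = (h.choose r : ℚ) * ((h-r).choose i) := by
        exact_mod_cast congrArg (Nat.cast : ℕ → ℚ) hmul
      rw [pow_add]
      linear_combination ((-1:ℚ)^r*(-1)^i) * this
    rw [Finset.sum_congr rfl e2, ← Finset.mul_sum]
    have e3 : ∑ i ∈ range ((h-r)+1), (-1:ℚ)^i * ((h-r).choose i)
        = if h - r = 0 then 1 else 0 := by
      have := Int.alternating_sum_range_choose (n := h - r)
      have := congrArg (Int.cast : ℤ → ℚ) this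
      push_cast at this
      rw [this]
    rw [e3]
    by_cases he : h = r
    · subst he; simp
    · rw [if_neg he, if_neg (by omega : ¬ h - r = 0)]; ring
  · have e0 : ∀ k ∈ range (s+1), (-1:ℚ)^k * (h.choose k) * (k.choose r) = 0 := by
      intro k hk
      rcases Nat.lt_or_ge k r with h1 | h1
      · rw [Nat.choose_eq_zero_of_lt h1]; simp
      · rw [Nat.choose_eq_zero_of_lt (show h < k by omega)]; simp
    rw [Finset.sum_congr rfl e0]
    rw [if_neg (by omega : ¬ h = r)]
    simp




lemma PAS (n r : ℕ) :
    ∑ k ∈ range (r+1), (-1:ℚ)^k * ((n+1).choose k) = (-1)^r * (n.choose r) := by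
  induction r with
  | zero => simp
  | succ r ih =>
    rw [Finset.sum_range_succ, ih]
    have h : ((n+1).choose (r+1) : ℚ) = n.choose r + n.choose (r+1) := by
      exact_mod_cast congrArg (Nat.cast : ℕ → ℚ) (Nat.choose_succ_succ n r)
    rw [h]; ring

lemma BID (n a r : ℕ) (ha : a ≤ n) :
    ∑ k ∈ range (r+1), (-1:ℚ)^k * ((n+1).choose k) * ((a + (r-k)).choose (r-k))
      = (-1)^r * ((n-a).choose r) := by
  induction r generalizing a with
  | zero => simp
  | succ r ihr =>
    induction a with
    | zero =>
      have := PAS n (r+1)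
      simpa using this
    | succ a iha =>
      have ha' : a ≤ n := le_trans (Nat.le_succ a) ha
      have key : ∀ k ∈ range (r+2),
          (-1:ℚ)^k * ((n+1).choose k) * (((a+1) + (r+1-k)).choose (r+1-k))
          = (-1:ℚ)^k * ((n+1).choose k) * ((a + (r+1-k)).choose (r+1-k))
            + (if k ≤ r then (-1:ℚ)^k * ((n+1).choose k) * ((a+1 + (r-k)).choose (r-k)) else 0) := by
        intro k hk
        rw [mem_range] at hk
        by_cases hkr : k ≤ r
        · simp only [if_pos hkr]
          have h2 : r+1-k = (r-k)+1 := by omega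
          have h1 : (a+1) + (r+1-k) = (a + ((r-k)+1)) + 1 := by omega
          rw [h1, h2, Nat.choose_succ_succ (a + (r-k+1)) (r-k)]
          have h4 : (a + (r - k + 1)).choose (r - k) = (a + 1 + (r - k)).choose (r-k) := by
            congr 1; omega
          rw [h4]
          push_cast; ring
        · have hk1 : k = r+1 := by omega
          subst hk1
          simp
      rw [Finset.sum_congr rfl key, Finset.sum_add_distrib]
      have hsplit : ∑ k ∈ range (r+2),
          (if k ≤ r then (-1:ℚ)^k * ((n+1).choose k) * ((a+1 + (r-k)).choose (r-k)) else 0)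
          = ∑ k ∈ range (r+1), (-1:ℚ)^k * ((n+1).choose k) * ((a+1 + (r-k)).choose (r-k)) := by
        rw [← Finset.sum_filter]
        congr 1
        ext x; simp [Finset.mem_filter, Finset.mem_range]; omega
      rw [hsplit, iha ha', ihr (a+1) ha]
      have hna : n - a = (n - (a+1)) + 1 := by omega
      rw [hna, Nat.choose_succ_succ (n - (a+1)) r]
      push_cast; ring
def hitF (s : ℕ) {M : ℕ} (σ : Equiv.Perm (Fin M)) : Finset (Fin M) :=
  univ.filter (fun i => (i:ℕ) + (σ i:ℕ) < s)

def PlOK (s : ℕ) (P : Finset (ℕ × ℕ)) : Prop :=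
  (∀ p ∈ P, p.1 + p.2 < s) ∧ (∀ p ∈ P, ∀ q ∈ P, p.1 = q.1 → p = q) ∧
    (∀ p ∈ P, ∀ q ∈ P, p.2 = q.2 → p = q)

instance PlOK.dec (s : ℕ) : DecidablePred (PlOK s) := fun _ => by
  unfold PlOK; exact inferInstance

def Pl (s k : ℕ) : Finset (Finset (ℕ × ℕ)) :=
  ((range s ×ˢ range s).powersetCard k).filter (PlOK s)

def RR (s k : ℕ) : ℕ := (Pl s k).card

lemma mem_Pl {s k : ℕ} {P : Finset (ℕ × ℕ)} :
    P ∈ Pl s k ↔ P.card = k ∧ PlOK s P := by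
  constructor
  · intro h
    rw [Pl, Finset.mem_filter, Finset.mem_powersetCard] at h
    exact ⟨h.1.2, h.2⟩
  · intro ⟨h1, h2⟩
    rw [Pl, Finset.mem_filter, Finset.mem_powersetCard]
    refine ⟨⟨?_, h1⟩, h2⟩
    intro p hp
    have := h2.1 p hp
    rw [Finset.mem_product, Finset.mem_range, Finset.mem_range]
    omega

lemma Pl_card_le {s k : ℕ} {P : Finset (ℕ × ℕ)} (h : P ∈ Pl s k) : k ≤ s := by
  rw [mem_Pl] at h
  obtain ⟨hc, hb, hf, _⟩ := h
  have h1 : P.card = (P.image Prod.fst).card :=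
    (Finset.card_image_of_injOn (fun p hp q hq => hf p hp q hq)).symm
  have h2 : P.image Prod.fst ⊆ range s := by
    intro x hx
    rw [Finset.mem_image] at hx
    obtain ⟨p, hp, he⟩ := hx
    rw [Finset.mem_range]
    have := hb p hp
    omega
  have := Finset.card_le_card h2
  rw [Finset.card_range] at this
  omega

lemma hitF_card_le {s M : ℕ} (σ : Equiv.Perm (Fin M)) : (hitF s σ).card ≤ s := by
  have h1 : (hitF s σ).card = ((hitF s σ).image Fin.val).card :=
    (Finset.card_image_of_injective _ Fin.val_injective).symm
  have h2 : (hitF s σ).image Fin.val ⊆ range s := by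
    intro x hx
    rw [Finset.mem_image] at hx
    obtain ⟨i, hi, he⟩ := hx
    rw [hitF, Finset.mem_filter] at hi
    rw [Finset.mem_range]
    omega
  have := Finset.card_le_card h2
  rw [Finset.card_range] at this
  omega

lemma L1 {M : ℕ} (s k : ℕ) (hs : s ≤ M) :
    ∑ σ : Equiv.Perm (Fin M), ((hitF s σ).card.choose k) = RR s k * (M - k)! := by
  classical
  have step1 : ∀ σ : Equiv.Perm (Fin M), (hitF s σ).card.choose k =
      ((Pl s k).filter (fun P => ∀ p ∈ P, ∃ i : Fin M, (i:ℕ) = p.1 ∧ ((σ i:ℕ) = p.2))).card := by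
    intro σ
    rw [← Finset.card_powersetCard]
    apply Finset.card_bij' (fun S _ => S.image (fun i : Fin M => ((i:ℕ), (σ i:ℕ))))
      (fun P _ => univ.filter (fun i : Fin M => ((i:ℕ), (σ i:ℕ)) ∈ P))
    · intro S hS
      rw [Finset.mem_powersetCard] at hS
      obtain ⟨hsub, hcard⟩ := hS
      have hmemhit : ∀ i ∈ S, (i:ℕ) + (σ i:ℕ) < s := by
        intro i hi
        have := hsub hi
        rw [hitF, Finset.mem_filter] at this
        exact this.2
      rw [Finset.mem_filter, mem_Pl]
      refine ⟨⟨?_, ?_, ?_, ?_⟩, ?_⟩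
      · rw [Finset.card_image_of_injective _ ?_, hcard]
        intro i j hij
        exact Fin.val_injective (congrArg Prod.fst hij)
      · intro p hp
        rw [Finset.mem_image] at hp
        obtain ⟨i, hi, he⟩ := hp
        rw [← he]
        exact hmemhit i hi
      · intro p hp q hq h
        rw [Finset.mem_image] at hp hq
        obtain ⟨i, _, hei⟩ := hp
        obtain ⟨j, _, hej⟩ := hq
        rw [← hei, ← hej] at h ⊢
        have : i = j := Fin.val_injective h
        rw [this]
      · intro p hp q hq h
        rw [Finset.mem_image] at hp hq
        obtain ⟨i, _, hei⟩ := hp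
        obtain ⟨j, _, hej⟩ := hq
        rw [← hei, ← hej] at h ⊢
        have : i = j := σ.injective (Fin.val_injective h)
        rw [this]
      · intro p hp
        rw [Finset.mem_image] at hp
        obtain ⟨i, _, he⟩ := hp
        exact ⟨i, by rw [← he], by rw [← he]⟩
    · intro P hP
      rw [Finset.mem_filter] at hP
      obtain ⟨hPl, hsub⟩ := hP
      rw [mem_Pl] at hPl
      obtain ⟨hcard, hb, hf, hsnd⟩ := hPl
      have himg : (univ.filter (fun i : Fin M => ((i:ℕ), (σ i:ℕ)) ∈ P)).image
          (fun i : Fin M => ((i:ℕ), (σ i:ℕ))) = P := by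
        apply Finset.Subset.antisymm
        · intro p hp
          rw [Finset.mem_image] at hp
          obtain ⟨i, hi, he⟩ := hp
          rw [Finset.mem_filter] at hi
          rw [← he]; exact hi.2
        · intro p hp
          obtain ⟨i, hi1, hi2⟩ := hsub p hp
          rw [Finset.mem_image]
          refine ⟨i, ?_, ?_⟩
          · rw [Finset.mem_filter]
            refine ⟨Finset.mem_univ i, ?_⟩
            rw [hi1, hi2, Prod.mk.eta]
            exact hp
          · rw [hi1, hi2, Prod.mk.eta]
      rw [Finset.mem_powersetCard]
      constructor
      · intro i hi
        rw [Finset.mem_filter] at hi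
        rw [hitF, Finset.mem_filter]
        exact ⟨Finset.mem_univ i, by have := hb _ hi.2; simpa using this⟩
      · have hinj : Function.Injective (fun i : Fin M => ((i:ℕ), (σ i:ℕ))) := by
          intro i j hij
          exact Fin.val_injective (congrArg Prod.fst hij)
        calc (univ.filter (fun i : Fin M => ((i:ℕ), (σ i:ℕ)) ∈ P)).card
            = ((univ.filter (fun i : Fin M => ((i:ℕ), (σ i:ℕ)) ∈ P)).image
                (fun i : Fin M => ((i:ℕ), (σ i:ℕ)))).card :=
              (Finset.card_image_of_injective _ hinj).symm
          _ = P.card := by rw [himg]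
          _ = k := hcard
    · intro S hS
      ext i
      rw [Finset.mem_filter, Finset.mem_image]
      constructor
      · rintro ⟨-, j, hj, he⟩
        have : j = i := Fin.val_injective (congrArg Prod.fst he)
        rwa [← this]
      · intro hi
        exact ⟨Finset.mem_univ i, i, hi, rfl⟩
    · intro P hP
      rw [Finset.mem_filter] at hP
      obtain ⟨hPl, hsub⟩ := hP
      rw [mem_Pl] at hPl
      obtain ⟨hcard, hb, hf, hsnd⟩ := hPl
      apply Finset.Subset.antisymm
      · intro p hp
        rw [Finset.mem_image] at hp
        obtain ⟨i, hi, he⟩ := hp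
        rw [Finset.mem_filter] at hi
        rw [← he]; exact hi.2
      · intro p hp
        obtain ⟨i, hi1, hi2⟩ := hsub p hp
        rw [Finset.mem_image]
        exact ⟨i, by rw [Finset.mem_filter]; exact ⟨Finset.mem_univ i,
            by rw [hi1, hi2, Prod.mk.eta]; exact hp⟩, by rw [hi1, hi2, Prod.mk.eta]⟩
  calc ∑ σ : Equiv.Perm (Fin M), ((hitF s σ).card.choose k)
      = ∑ σ : Equiv.Perm (Fin M), ∑ P ∈ Pl s k,
          (if (∀ p ∈ P, ∃ i : Fin M, (i:ℕ) = p.1 ∧ ((σ i:ℕ) = p.2)) then 1 else 0) := by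
        apply Finset.sum_congr rfl
        intro σ _
        rw [step1 σ, Finset.card_filter]
    _ = ∑ P ∈ Pl s k, ∑ σ : Equiv.Perm (Fin M),
          (if (∀ p ∈ P, ∃ i : Fin M, (i:ℕ) = p.1 ∧ ((σ i:ℕ) = p.2)) then 1 else 0) :=
        Finset.sum_comm
    _ = ∑ P ∈ Pl s k, (M - k)! := by
        apply Finset.sum_congr rfl
        intro P hP
        rw [← Finset.card_filter]
        rw [mem_Pl] at hP
        obtain ⟨hcard, hb, hf, hsnd⟩ := hP
        have hbnd : ∀ p ∈ P, p.1 < M ∧ p.2 < M := by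
          intro p hp; have := hb p hp; omega
        set Q : Finset (Fin M × Fin M) := P.attach.image
          (fun p => ((⟨p.1.1, (hbnd p.1 p.2).1⟩ : Fin M), (⟨p.1.2, (hbnd p.1 p.2).2⟩ : Fin M)))
          with hQ
        have hQmem : ∀ q ∈ Q, ((q.1 : ℕ), (q.2 : ℕ)) ∈ P := by
          intro q hq
          rw [hQ, Finset.mem_image] at hq
          obtain ⟨p, _, he⟩ := hq
          rw [← he]
          simpa using p.2
        have hQinj2 : ∀ p (hp : p ∈ P.attach) q (hq : q ∈ P.attach),
            ((⟨p.1.1, (hbnd p.1 p.2).1⟩ : Fin M), (⟨p.1.2, (hbnd p.1 p.2).2⟩ : Fin M)) =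
            ((⟨q.1.1, (hbnd q.1 q.2).1⟩ : Fin M), (⟨q.1.2, (hbnd q.1 q.2).2⟩ : Fin M)) → p = q := by
          intro p _ q _ h
          have h1 := congrArg (fun x => (x.1 : ℕ)) h
          have h2 := congrArg (fun x => (x.2 : ℕ)) h
          simp only at h1 h2
          apply Subtype.ext
          exact Prod.ext h1 h2
        have hQcard : Q.card = k := by
          rw [hQ, Finset.card_image_of_injOn (fun p hp q hq => hQinj2 p hp q hq),
            Finset.card_attach, hcard]
        have hQ1 : ∀ p ∈ Q, ∀ q ∈ Q, p.1 = q.1 → p = q := by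
          intro p hp q hq h
          have h1 := hf _ (hQmem p hp) _ (hQmem q hq) (by rw [h])
          have e1 : ((p.1 : ℕ), (p.2 : ℕ)) = ((q.1 : ℕ), (q.2 : ℕ)) := h1
          exact Prod.ext (Fin.val_injective (congrArg Prod.fst e1))
            (Fin.val_injective (congrArg Prod.snd e1))
        have hQ2 : ∀ p ∈ Q, ∀ q ∈ Q, p.2 = q.2 → p = q := by
          intro p hp q hq h
          have h1 := hsnd _ (hQmem p hp) _ (hQmem q hq) (by rw [h])
          have e1 : ((p.1 : ℕ), (p.2 : ℕ)) = ((q.1 : ℕ), (q.2 : ℕ)) := h1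
          exact Prod.ext (Fin.val_injective (congrArg Prod.fst e1))
            (Fin.val_injective (congrArg Prod.snd e1))
        have cond_iff : ∀ σ : Equiv.Perm (Fin M),
            (∀ p ∈ P, ∃ i : Fin M, (i:ℕ) = p.1 ∧ ((σ i:ℕ) = p.2)) ↔
            (∀ q ∈ Q, σ q.1 = q.2) := by
          intro σ
          constructor
          · intro h q hq
            rw [hQ, Finset.mem_image] at hq
            obtain ⟨p, _, he⟩ := hq
            obtain ⟨i, hi1, hi2⟩ := h p.1 p.2
            rw [← he]
            simp only
            have he2 : i = ⟨p.1.1, (hbnd p.1 p.2).1⟩ := Fin.val_injective (by simpa using hi1)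
            rw [← he2]
            apply Fin.val_injective
            simpa using hi2
          · intro h p hp
            have hq : ((⟨p.1, (hbnd p hp).1⟩ : Fin M), (⟨p.2, (hbnd p hp).2⟩ : Fin M)) ∈ Q := by
              rw [hQ, Finset.mem_image]
              refine ⟨⟨p, hp⟩, Finset.mem_attach _ _, rfl⟩
            have := h _ hq
            exact ⟨⟨p.1, (hbnd p hp).1⟩, rfl, by rw [this]⟩
        have hfe : (univ.filter (fun σ : Equiv.Perm (Fin M) =>
            ∀ p ∈ P, ∃ i : Fin M, (i:ℕ) = p.1 ∧ ((σ i:ℕ) = p.2)))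
            = (univ.filter (fun σ : Equiv.Perm (Fin M) => ∀ q ∈ Q, σ q.1 = q.2)) := by
          ext σ
          rw [Finset.mem_filter, Finset.mem_filter]
          exact and_congr_right (fun _ => cond_iff σ)
        rw [hfe, EXT0 Q hQ1 hQ2, hQcard]
    _ = RR s k * (M - k)! := by
        rw [Finset.sum_const, RR, smul_eq_mul]
-- depends on: DELTA (s2), hitF/Pl/RR/L1 (s4)
lemma INV {M : ℕ} (s r : ℕ) (hs : s ≤ M) :
    ((univ.filter (fun σ : Equiv.Perm (Fin M) => (hitF s σ).card = r)).card : ℚ)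
      = (-1:ℚ)^r * ∑ k ∈ range (s+1), (-1:ℚ)^k * (k.choose r) * (RR s k) * ((M-k)! : ℚ) := by
  have key : ∑ k ∈ range (s+1), (-1:ℚ)^k * (k.choose r) * (RR s k) * ((M-k)! : ℚ)
      = ∑ σ : Equiv.Perm (Fin M), (-1:ℚ)^r * (if (hitF s σ).card = r then 1 else 0) := by
    calc ∑ k ∈ range (s+1), (-1:ℚ)^k * (k.choose r) * (RR s k) * ((M-k)! : ℚ)
        = ∑ k ∈ range (s+1), (-1:ℚ)^k * (k.choose r) *
            ∑ σ : Equiv.Perm (Fin M), ((hitF s σ).card.choose k : ℚ) := by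
          apply Finset.sum_congr rfl
          intro k _
          have hcast := congrArg (Nat.cast : ℕ → ℚ) (L1 s k hs)
          push_cast at hcast
          rw [hcast]; ring
      _ = ∑ σ : Equiv.Perm (Fin M), ∑ k ∈ range (s+1),
            (-1:ℚ)^k * ((hitF s σ).card.choose k) * (k.choose r) := by
          rw [Finset.sum_comm]
          apply Finset.sum_congr rfl
          intro σ _
          rw [Finset.mul_sum]
          apply Finset.sum_congr rfl
          intro k _
          ring
      _ = ∑ σ : Equiv.Perm (Fin M), (-1:ℚ)^r * (if (hitF s σ).card = r then 1 else 0) := by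
          apply Finset.sum_congr rfl
          intro σ _
          rw [DELTA s _ r (hitF_card_le σ)]
  rw [key, ← Finset.mul_sum, ← mul_assoc]
  have h2 : ((-1:ℚ)^r * (-1:ℚ)^r) = 1 := by
    rw [← pow_add, ← two_mul, pow_mul]
    norm_num
  rw [h2, one_mul, Finset.sum_boole]

def AvC (M s : ℕ) : ℕ :=
  (univ.filter (fun σ : Equiv.Perm (Fin M) => ∀ i : Fin M, ¬((i:ℕ) + (σ i:ℕ) < s))).card

lemma AvC_eq_hit_zero (M s : ℕ) :
    AvC M s = (univ.filter (fun σ : Equiv.Perm (Fin M) => (hitF s σ).card = 0)).card := by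
  unfold AvC
  congr 1
  ext σ
  rw [Finset.mem_filter, Finset.mem_filter, Finset.card_eq_zero]
  constructor
  · intro ⟨h1, h2⟩
    refine ⟨h1, ?_⟩
    rw [hitF, Finset.filter_eq_empty_iff]
    intro i _
    exact h2 i
  · intro ⟨h1, h2⟩
    refine ⟨h1, ?_⟩
    rw [hitF, Finset.filter_eq_empty_iff] at h2
    intro i
    exact h2 (Finset.mem_univ i)
-- Avoid predicate on permutations
def AvP (s : ℕ) {M : ℕ} (σ : Equiv.Perm (Fin M)) : Prop :=
  ∀ i : Fin M, ¬((i:ℕ) + (σ i:ℕ) < s)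

lemma AvC_rec (M s : ℕ) (hs : s ≤ M) :
    AvC (M+1) (s+1) = (M - s) * AvC M s := by
  classical
  -- Ψ : the backward construction
  set Psi : Fin (M+1) → Equiv.Perm (Fin M) → Equiv.Perm (Fin (M+1)) :=
    fun q τ => ((finSuccEquiv' q).trans (Equiv.optionCongr τ)).trans (finSuccEquiv' 0).symm
    with hPsi
  have Psi_at : ∀ q τ, Psi q τ q = 0 := by
    intro q τ
    simp [hPsi, finSuccEquiv'_at, finSuccEquiv'_symm_none]
  have Psi_ab : ∀ q τ j, Psi q τ (q.succAbove j) = (τ j).succ := by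
    intro q τ j
    simp [hPsi, finSuccEquiv'_succAbove, finSuccEquiv'_symm_some, Fin.zero_succAbove]
  have succAbove_val : ∀ (q : Fin (M+1)) (j : Fin M),
      ((j:ℕ) < (q:ℕ) ∧ ((q.succAbove j : Fin (M+1)) : ℕ) = j) ∨
      ((q:ℕ) ≤ (j:ℕ) ∧ ((q.succAbove j : Fin (M+1)) : ℕ) = j + 1) := by
    intro q j
    by_cases h : Fin.castSucc j < q
    · left
      refine ⟨?_, by rw [Fin.succAbove_of_castSucc_lt _ _ h]; rfl⟩
      have := h
      rw [Fin.lt_def] at this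
      simpa using this
    · right
      have h' := not_lt.mp h
      refine ⟨?_, by rw [Fin.succAbove_of_le_castSucc _ _ h']; rfl⟩
      rw [Fin.le_def] at h'
      simpa using h'
  -- forward function on values
  have fwd_ne : ∀ (σ : Equiv.Perm (Fin (M+1))) (j : Fin M), σ ((σ⁻¹ 0).succAbove j) ≠ 0 := by
    intro σ j h
    have : (σ⁻¹ 0).succAbove j = σ⁻¹ 0 := by
      have := congrArg σ.symm h
      simpa using this
    exact Fin.succAbove_ne _ j this
  set f : Equiv.Perm (Fin (M+1)) → Fin M → Fin M :=
    fun σ j => (σ ((σ⁻¹ 0).succAbove j)).pred (fwd_ne σ j) with hf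
  have finj : ∀ σ, Function.Injective (f σ) := by
    intro σ x y hxy
    simp only [hf] at hxy
    have h1 := Fin.pred_inj.mp hxy
    have h2 := σ.injective h1
    exact Fin.succAbove_right_injective h2
  set tF : Equiv.Perm (Fin (M+1)) → Equiv.Perm (Fin M) :=
    fun σ => Equiv.ofBijective (f σ) (Finite.injective_iff_bijective.mp (finj σ)) with htF
  have tF_apply : ∀ σ j, tF σ j = f σ j := fun σ j => rfl
  -- the equivalence
  have E : {σ : Equiv.Perm (Fin (M+1)) // AvP (s+1) σ} ≃
      ({q : Fin (M+1) // s+1 ≤ (q:ℕ)} × {τ : Equiv.Perm (Fin M) // AvP s τ}) := by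
    refine
      { toFun := fun σ => (⟨σ.1⁻¹ 0, ?_⟩, ⟨tF σ.1, ?_⟩)
        invFun := fun x => ⟨Psi x.1.1 x.2.1, ?_⟩
        left_inv := ?_
        right_inv := ?_ }
    · -- σ⁻¹ 0 has value ≥ s+1
      have h := σ.2 (σ.1⁻¹ 0)
      rw [show σ.1 (σ.1⁻¹ 0) = 0 from σ.1.apply_symm_apply 0] at h
      simp only [Fin.val_zero, add_zero] at h
      omega
    · -- tF σ avoids s
      intro j
      have hpval : s + 1 ≤ ((σ.1⁻¹ 0 : Fin (M+1)) : ℕ) := by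
        have h := σ.2 (σ.1⁻¹ 0)
        rw [show σ.1 (σ.1⁻¹ 0) = 0 from σ.1.apply_symm_apply 0] at h
        simp only [Fin.val_zero, add_zero] at h
        omega
      have hne : ((σ.1 ((σ.1⁻¹ 0).succAbove j)) : ℕ) ≠ 0 := by
        intro h0
        exact fwd_ne σ.1 j (Fin.ext (by simpa using h0))
      have hv : (tF σ.1 j : ℕ) = (σ.1 ((σ.1⁻¹ 0).succAbove j) : ℕ) - 1 := by
        rw [tF_apply]
        exact Fin.coe_pred _ _
      show ¬ ((j:ℕ) + ((tF σ.1 j : Fin M) : ℕ) < s)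
      rw [hv]
      have hav : ¬ ((((σ.1⁻¹ 0).succAbove j : Fin (M+1)) : ℕ)
          + ((σ.1 ((σ.1⁻¹ 0).succAbove j) : Fin (M+1)) : ℕ) < s + 1) := σ.2 _
      rcases succAbove_val (σ.1⁻¹ 0) j with ⟨h2, h3⟩ | ⟨h2, h3⟩ <;> rw [h3] at hav <;> omega
    · -- Psi avoids s+1
      obtain ⟨⟨q, hq⟩, ⟨τ, hτ⟩⟩ := x
      intro x
      by_cases hx : x = q
      · subst hx
        rw [Psi_at]
        simp only [Fin.val_zero, add_zero]
        omega
      · obtain ⟨j, hj⟩ := Fin.exists_succAbove_eq hx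
        rw [← hj, Psi_ab]
        have h1 : (((τ j).succ : Fin (M+1)) : ℕ) = (τ j : ℕ) + 1 := Fin.val_succ _
        have hτj : ¬ ((j:ℕ) + ((τ j):ℕ) < s) := hτ j
        rcases succAbove_val q j with ⟨h2, h3⟩ | ⟨h2, h3⟩ <;> rw [h3, h1] <;> omega
    · -- left inverse
      rintro ⟨σ, hσ⟩
      apply Subtype.ext
      apply Equiv.ext
      intro x
      simp only
      by_cases hx : x = σ⁻¹ 0
      · subst hx
        rw [Psi_at]
        simp
      · obtain ⟨j, hj⟩ := Fin.exists_succAbove_eq hx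
        rw [← hj, Psi_ab, tF_apply]
        simp only [hf]
        rw [Fin.succ_pred]
    · -- right inverse
      rintro ⟨⟨q, hq⟩, ⟨τ, hτ⟩⟩
      have hq0 : (Psi q τ)⁻¹ 0 = q := by
        rw [Equiv.Perm.inv_eq_iff_eq]
        exact (Psi_at q τ).symm
      refine Prod.ext ?_ ?_
      · apply Subtype.ext
        simp only
        exact hq0
      · apply Subtype.ext
        apply Equiv.ext
        intro j
        apply Fin.ext
        rw [tF_apply]
        simp only [hf]
        rw [Fin.coe_pred]
        have : (Psi q τ) (((Psi q τ)⁻¹ 0).succAbove j) = (τ j).succ := by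
          rw [hq0, Psi_ab]
        rw [this]
        simp
  -- cardinalities
  have c1 : AvC (M+1) (s+1) = Fintype.card {σ : Equiv.Perm (Fin (M+1)) // AvP (s+1) σ} := by
    rw [AvC, Fintype.card_subtype]
    congr 1
    ext σ
    simp [AvP]
  have c2 : AvC M s = Fintype.card {τ : Equiv.Perm (Fin M) // AvP s τ} := by
    rw [AvC, Fintype.card_subtype]
    congr 1
    ext σ
    simp [AvP]
  have c3 : Fintype.card {q : Fin (M+1) // s+1 ≤ (q:ℕ)} = M - s := by
    have e : {q : Fin (M+1) // s+1 ≤ (q:ℕ)} ≃ Fin (M - s) :=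
      { toFun := fun q => ⟨(q.1 : ℕ) - (s+1), by have := q.2; have := q.1.isLt; omega⟩
        invFun := fun i => ⟨⟨(i : ℕ) + s + 1, by have := i.isLt; omega⟩,
          by show s + 1 ≤ (i : ℕ) + s + 1; omega⟩
        left_inv := by
          rintro ⟨q, hq⟩
          apply Subtype.ext
          apply Fin.ext
          show ((q:ℕ) - (s+1)) + s + 1 = (q:ℕ)
          omega
        right_inv := by
          rintro i
          apply Fin.ext
          show ((i:ℕ) + s + 1) - (s+1) = (i:ℕ)
          omega }
    rw [Fintype.card_congr e, Fintype.card_fin]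
  rw [c1, c2, Fintype.card_congr E, Fintype.card_prod, c3]

lemma AvC_prod : ∀ (s M : ℕ), s ≤ M → AvC M s = (M - s)^s * (M - s)! := by
  intro s
  induction s with
  | zero =>
    intro M _
    rw [AvC]
    have : (univ.filter (fun σ : Equiv.Perm (Fin M) => ∀ i : Fin M, ¬((i:ℕ) + (σ i:ℕ) < 0)))
        = univ := by
      apply Finset.filter_true_of_mem
      intro σ _ i
      omega
    rw [this, Finset.card_univ, Fintype.card_perm, Fintype.card_fin]
    simp
  | succ s ih =>
    intro M hM
    obtain ⟨M', rfl⟩ : ∃ M', M = M' + 1 := ⟨M - 1, by omega⟩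
    have hs : s ≤ M' := by omega
    rw [AvC_rec M' s hs, ih M' hs]
    have h1 : M' + 1 - (s+1) = M' - s := by omega
    rw [h1]
    ring
lemma MAIN (n s r : ℕ) (hs : s + 1 ≤ n) (hr : r ≤ n) :
    ((univ.filter (fun σ : Equiv.Perm (Fin n) => (hitF s σ).card = r)).card : ℚ)
      = (n ! : ℚ) * (1 + n) * ∑ k ∈ range (r+1),
        (-1:ℚ)^k * ((n + (r-k) - s : ℕ) : ℚ)^(s+1) * (((n + (r-k) - s - 1 : ℕ))! : ℚ)
          / ((k ! : ℚ) * (((1 + n - k)!) : ℚ) * (((r - k)!) : ℚ)) := by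
  have hfacne : ∀ q : ℕ, ((q ! : ℕ) : ℚ) ≠ 0 := by
    intro q
    exact_mod_cast Nat.factorial_ne_zero q
  -- expand AvC as alternating rook sum
  have stepK2 : ∀ u : ℕ, (AvC (n + u) s : ℚ)
      = ∑ j ∈ range (s+1), (-1:ℚ)^j * (RR s j : ℚ) * (((n + u - j)! : ℕ) : ℚ) := by
    intro u
    rw [AvC_eq_hit_zero]
    have := INV (M := n + u) s 0 (by omega)
    rw [this]
    simp only [pow_zero, one_mul, Nat.choose_zero_right, Nat.cast_one]
    apply Finset.sum_congr rfl
    intro j _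
    ring
  -- per-k transformation
  have stepK : ∀ k ∈ range (r+1),
      (n ! : ℚ) * (1 + n) * ((-1:ℚ)^k * ((n + (r-k) - s : ℕ) : ℚ)^(s+1)
          * (((n + (r-k) - s - 1 : ℕ))! : ℚ)
          / ((k ! : ℚ) * (((1 + n - k)!) : ℚ) * (((r - k)!) : ℚ)))
      = ∑ j ∈ range (s+1), (-1:ℚ)^k * ((n+1).choose k : ℚ) *
          ((-1:ℚ)^j * (RR s j : ℚ) * (((n + (r-k) - j)! : ℕ) : ℚ)) / ((r-k)! : ℚ) := by
    intro k hk
    rw [mem_range] at hk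
    set u := r - k with hu
    set X := n + u - s with hX
    have hX1 : 1 ≤ X := by omega
    have hAv : (AvC (n + u) s : ℚ) = ((X : ℕ) : ℚ)^s * ((X ! : ℕ) : ℚ) := by
      rw [AvC_prod s (n+u) (by omega)]
      push_cast
      ring
    have hXfac : ((X ! : ℕ) : ℚ) = (X : ℚ) * (((X - 1)! : ℕ) : ℚ) := by
      have h1 : X = (X - 1) + 1 := by omega
      rw [h1, Nat.factorial_succ]
      push_cast
      ring
    have hch : (((n+1).choose k : ℕ) : ℚ) * (k ! : ℚ) * (((n+1-k)! : ℕ) : ℚ)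
        = (((n+1)! : ℕ) : ℚ) := by
      exact_mod_cast congrArg (Nat.cast : ℕ → ℚ)
        (Nat.choose_mul_factorial_mul_factorial (show k ≤ n+1 by omega))
    have h1nk : (1 + n - k) = (n + 1 - k) := by omega
    have hfs : (n ! : ℚ) * (1 + (n:ℚ)) = (((n+1)! : ℕ) : ℚ) := by
      rw [Nat.factorial_succ]
      push_cast
      ring
    rw [← Finset.sum_div, ← Finset.mul_sum, ← stepK2 u, hAv, hXfac, h1nk, hfs]
    have hpow : ((X : ℕ) : ℚ)^(s+1) = ((X : ℕ) : ℚ)^s * (X : ℚ) := by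
      rw [pow_succ]
    rw [hpow]
    field_simp
    linear_combination (-1:ℚ) * hch
  -- per-j inner sum via BID
  have stepJ : ∀ j ∈ range (s+1),
      (∑ k ∈ range (r+1), (-1:ℚ)^k * ((n+1).choose k : ℚ) *
          ((-1:ℚ)^j * (RR s j : ℚ) * (((n + (r-k) - j)! : ℕ) : ℚ)) / ((r-k)! : ℚ))
      = (-1:ℚ)^r * ((-1:ℚ)^j * (j.choose r : ℚ) * (RR s j : ℚ) * (((n-j)! : ℕ) : ℚ)) := by
    intro j hj
    rw [mem_range] at hj
    have hjn : j ≤ n - 1 := by omega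
    have htrans : ∀ k ∈ range (r+1),
        (-1:ℚ)^k * ((n+1).choose k : ℚ) *
          ((-1:ℚ)^j * (RR s j : ℚ) * (((n + (r-k) - j)! : ℕ) : ℚ)) / ((r-k)! : ℚ)
        = ((-1:ℚ)^j * (RR s j : ℚ) * (((n-j)! : ℕ) : ℚ)) *
          ((-1:ℚ)^k * ((n+1).choose k : ℚ) * ((((n-j) + (r-k)).choose (r-k) : ℕ) : ℚ)) := by
      intro k hk
      rw [mem_range] at hk
      have he : n + (r-k) - j = (n-j) + (r-k) := by omega
      rw [he]
      have hfac : ((((n-j) + (r-k))! : ℕ) : ℚ)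
          = ((((n-j) + (r-k)).choose (r-k) : ℕ) : ℚ) * (((r-k)! : ℕ) : ℚ) * (((n-j)! : ℕ) : ℚ) := by
        have h0 := Nat.choose_mul_factorial_mul_factorial
          (show (r-k) ≤ (n-j) + (r-k) by omega)
        have h1 : (n-j) + (r-k) - (r-k) = n - j := by omega
        rw [h1] at h0
        exact_mod_cast congrArg (Nat.cast : ℕ → ℚ) h0.symm
      rw [hfac]
      field_simp
    rw [Finset.sum_congr rfl htrans, ← Finset.mul_sum]
    have hbid := BID n (n - j) r (by omega)
    have hnnj : n - (n - j) = j := by omega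
    rw [hnnj] at hbid
    rw [hbid]
    ring
  rw [Finset.mul_sum, Finset.sum_congr rfl stepK, Finset.sum_comm,
    Finset.sum_congr rfl stepJ]
  have hinv := INV (M := n) s r (by omega)
  rw [hinv, Finset.mul_sum]
/-- exact 2-race final-rank distribution.  For `1 ≤ n_b`, `2 ≤ n_t ≤ n_b + 1` and
`1 ≤ m ≤ n_b + 1`, the number of permutations of `{1,…,n_b}` whose score statistic at threshold
`n_t` equals `m − 1` is
`n_b! (1+n_b) Σ_{k=0}^{m−1} (−1)^k (1+n_b−n_t+m−k)^{n_t−1} (n_b−n_t+m−k)! / (k! (1+n_b−k)! (m−k−1)!)`;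
equivalently the probability `P_{n_t}(m)` (the count divided by `n_b!`) equals
`(1+n_b) Σ_{k=0}^{m−1} (−1)^k (1+n_b−n_t+m−k)^{n_t−1} (n_b−n_t+m−k)! / (k! (1+n_b−k)! (m−k−1)!)`. -/
theorem tworace_rank_distribution (n_b n_t m : ℕ) (hb : 1 ≤ n_b)
    (ht2 : 2 ≤ n_t) (ht : n_t ≤ n_b + 1) (hm1 : 1 ≤ m) (hm : m ≤ n_b + 1) :
    (((Finset.univ.filter fun σ : Equiv.Perm (Fin n_b) =>
        scoreStat n_b n_t σ = m - 1).card : ℚ)) =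
      (n_b ! : ℚ) * (1 + (n_b : ℚ)) *
        ∑ k ∈ Finset.range m,
          (-1 : ℚ) ^ k * ((1 + n_b + m - n_t - k : ℕ) : ℚ) ^ (n_t - 1) *
            ((n_b + m - n_t - k)! : ℚ) /
              ((k ! : ℚ) * ((1 + n_b - k)! : ℚ) * ((m - 1 - k)! : ℚ)) ∧
    (((Finset.univ.filter fun σ : Equiv.Perm (Fin n_b) =>
        scoreStat n_b n_t σ = m - 1).card : ℚ)) / (n_b ! : ℚ) =
      (1 + (n_b : ℚ)) *
        ∑ k ∈ Finset.range m,
          (-1 : ℚ) ^ k * ((1 + n_b + m - n_t - k : ℕ) : ℚ) ^ (n_t - 1) *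
            ((n_b + m - n_t - k)! : ℚ) /
              ((k ! : ℚ) * ((1 + n_b - k)! : ℚ) * ((m - 1 - k)! : ℚ)) := by
  obtain ⟨s, rfl⟩ : ∃ s, n_t = s + 2 := ⟨n_t - 2, by omega⟩
  obtain ⟨r, rfl⟩ : ∃ r, m = r + 1 := ⟨m - 1, by omega⟩
  have hs : s + 1 ≤ n_b := by omega
  have hr : r ≤ n_b := by omega
  have hset : (univ.filter fun σ : Equiv.Perm (Fin n_b) => scoreStat n_b (s+2) σ = (r+1) - 1)
      = (univ.filter fun σ : Equiv.Perm (Fin n_b) => (hitF s σ).card = r) := by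
    apply Finset.filter_congr
    intro σ _
    have hsc : scoreStat n_b (s+2) σ = (hitF s σ).card := by
      rw [scoreStat, hitF]
      congr 1
      apply Finset.filter_congr
      intro i _
      constructor <;> intro h <;> omega
    rw [hsc]
    have : (r+1) - 1 = r := by omega
    rw [this]
  have hterm : ∀ k ∈ range (r+1),
      (-1:ℚ)^k * ((1 + n_b + (r+1) - (s+2) - k : ℕ) : ℚ) ^ ((s+2) - 1) *
        ((n_b + (r+1) - (s+2) - k)! : ℚ) /
        ((k ! : ℚ) * ((1 + n_b - k)! : ℚ) * (((r+1) - 1 - k)! : ℚ))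
      = (-1:ℚ)^k * ((n_b + (r-k) - s : ℕ) : ℚ)^(s+1) * (((n_b + (r-k) - s - 1 : ℕ))! : ℚ)
          / ((k ! : ℚ) * (((1 + n_b - k)!) : ℚ) * (((r - k)!) : ℚ)) := by
    intro k hk
    rw [mem_range] at hk
    have e1 : 1 + n_b + (r+1) - (s+2) - k = n_b + (r-k) - s := by omega
    have e2 : n_b + (r+1) - (s+2) - k = n_b + (r-k) - s - 1 := by omega
    have e3 : (r+1) - 1 - k = r - k := by omega
    have e4 : (s+2) - 1 = s + 1 := by omega
    rw [e1, e2, e3, e4]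
  have part1 : (((Finset.univ.filter fun σ : Equiv.Perm (Fin n_b) =>
        scoreStat n_b (s+2) σ = (r+1) - 1).card : ℚ)) =
      (n_b ! : ℚ) * (1 + (n_b : ℚ)) *
        ∑ k ∈ Finset.range (r+1),
          (-1 : ℚ) ^ k * ((1 + n_b + (r+1) - (s+2) - k : ℕ) : ℚ) ^ ((s+2) - 1) *
            ((n_b + (r+1) - (s+2) - k)! : ℚ) /
              ((k ! : ℚ) * ((1 + n_b - k)! : ℚ) * (((r+1) - 1 - k)! : ℚ)) := by
    rw [hset, Finset.sum_congr rfl hterm]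
    exact MAIN n_b s r hs hr
  refine ⟨part1, ?_⟩
  rw [part1, mul_assoc, mul_div_cancel_left₀]
  exact_mod_cast Nat.factorial_ne_zero n_b
end

section
/- Let n_b ≥ 1, let n_t be an integer, and let 0 ≤ m − 1 ≤ n_b. The number of permutations σ of {1,…,n_b} whose score statistic at threshold n_t equals m − 1 is equal to the number of permutations σ of {1,…,n_b} whose score statistic at threshold 2·n_b + 3 − n_t equals n_b + 1 − m. In particular, for n_t = n_b + 1 + i with 1 ≤ i ≤ n_b, the final-rank distribution satisfies P_{n_b+1+i}(m) = P_{n_b+2−i}(n_b + 2 − m). -/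
/-- The score statistic of a permutation `σ` of `{1,…,n}` at an integer threshold `t`: the
number of indices `i ∈ {1,…,n}` with `i + σ(i) < t`.  Here `{1,…,n}` is encoded by `Fin n`,
the index being `(i : ℕ) + 1` and its image `(σ i : ℕ) + 1`. -/
def scoreStatZ (n : ℕ) (t : ℤ) (σ : Equiv.Perm (Fin n)) : ℕ :=
  (Finset.univ.filter fun i : Fin n =>
    (((i : ℕ) : ℤ) + 1) + (((σ i : ℕ) : ℤ) + 1) < t).card

lemma score_rev (n : ℕ) (t : ℤ) (σ : Equiv.Perm (Fin n)) :
    scoreStatZ n (2 * n + 3 - t) (Fin.revPerm * σ * Fin.revPerm) + scoreStatZ n t σ = n := by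
  unfold scoreStatZ
  have h1 : (Finset.univ.filter fun i : Fin n =>
      (((i : ℕ) : ℤ) + 1) +
        ((((Fin.revPerm * σ * Fin.revPerm : Equiv.Perm (Fin n)) i : ℕ) : ℤ) + 1)
          < 2 * n + 3 - t).card
    = (Finset.univ.filter fun j : Fin n =>
        ¬ ((((j : ℕ) : ℤ) + 1) + (((σ j : ℕ) : ℤ) + 1) < t)).card := by
    apply Finset.card_nbij' (fun i => i.rev) (fun j => j.rev)
    · intro a ha
      simp only [Finset.mem_coe, Finset.mem_filter, Finset.mem_univ, true_and, Equiv.Perm.mul_apply,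
        Fin.revPerm_apply] at ha ⊢
      have hv : ((a.rev : ℕ) : ℤ) = n - 1 - (a : ℕ) := by
        have := a.isLt
        rw [Fin.val_rev]
        push_cast [Nat.cast_sub (by omega : (a : ℕ) + 1 ≤ n)]
        push_cast
        ring
      have hv2 : (((σ a.rev).rev : ℕ) : ℤ) = n - 1 - ((σ a.rev : ℕ) : ℤ) := by
        have := (σ a.rev).isLt
        rw [Fin.val_rev]
        push_cast [Nat.cast_sub (by omega : ((σ a.rev : ℕ)) + 1 ≤ n)]
        push_cast
        ring
      rw [hv2] at ha
      rw [hv]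
      omega
    · intro b hb
      simp only [Finset.mem_coe, Finset.mem_filter, Finset.mem_univ, true_and, Equiv.Perm.mul_apply,
        Fin.revPerm_apply, Fin.rev_rev] at hb ⊢
      have hv : ((b.rev : ℕ) : ℤ) = n - 1 - (b : ℕ) := by
        have := b.isLt
        rw [Fin.val_rev]
        push_cast [Nat.cast_sub (by omega : (b : ℕ) + 1 ≤ n)]
        push_cast
        ring
      have hv2 : (((σ b).rev : ℕ) : ℤ) = n - 1 - ((σ b : ℕ) : ℤ) := by
        have := (σ b).isLt
        rw [Fin.val_rev]
        push_cast [Nat.cast_sub (by omega : ((σ b : ℕ)) + 1 ≤ n)]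
        push_cast
        ring
      rw [hv, hv2]
      omega
    · intro a _; exact Fin.rev_rev a
    · intro b _; exact Fin.rev_rev b
  rw [h1, Nat.add_comm]
  rw [Finset.card_filter_add_card_filter_not]
  simp

/-- symmetry of the 2-race final-rank distribution.  For `n_b ≥ 1`, any integer
threshold `n_t` and `1 ≤ m ≤ n_b + 1`, the number of permutations of `{1,…,n_b}` whose score
statistic at threshold `n_t` equals `m − 1` equals the number of permutations whose score
statistic at threshold `2·n_b + 3 − n_t` equals `n_b + 1 − m`.  In particular
`P_{n_b+1+i}(m) = P_{n_b+2−i}(n_b+2−m)`. -/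
theorem tworace_rank_symmetry (n_b : ℕ) (n_t : ℤ) (m : ℕ) (hb : 1 ≤ n_b)
    (hm1 : 1 ≤ m) (hm : m ≤ n_b + 1) :
    (Finset.univ.filter fun σ : Equiv.Perm (Fin n_b) =>
        scoreStatZ n_b n_t σ = m - 1).card =
    (Finset.univ.filter fun σ : Equiv.Perm (Fin n_b) =>
        scoreStatZ n_b (2 * n_b + 3 - n_t) σ = n_b + 1 - m).card := by
  apply Finset.card_nbij' (fun σ => Fin.revPerm * σ * Fin.revPerm)
    (fun σ => Fin.revPerm * σ * Fin.revPerm)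
  · intro σ hσ
    simp only [Finset.mem_coe, Finset.mem_filter, Finset.mem_univ, true_and] at hσ ⊢
    have := score_rev n_b n_t σ
    have hle : scoreStatZ n_b n_t σ ≤ n_b := by omega
    omega
  · intro σ hσ
    simp only [Finset.mem_coe, Finset.mem_filter, Finset.mem_univ, true_and] at hσ ⊢
    have := score_rev n_b n_t (Fin.revPerm * σ * Fin.revPerm)
    have heq : Fin.revPerm * (Fin.revPerm * σ * Fin.revPerm) * Fin.revPerm = σ := by
      ext x
      simp [Equiv.Perm.mul_apply]
    rw [heq] at this
    omega
  · intro σ _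
    ext x
    simp [Equiv.Perm.mul_apply]
  · intro σ _
    ext x
    simp [Equiv.Perm.mul_apply]
end

section
/- Let n ≥ 1 and 0 ≤ k ≤ n − 1. The number of permutations σ of {1,…,n} with exactly k indices i ∈ {1,…,n} satisfying i + σ(i) ≤ n (equivalently, σ(i) ≤ n − i) is equal to the Eulerian number A(n,k). Consequently, in the 2-race model at the middle score n_t = 1 + n_b, the final-rank probability satisfies P_{n_t=1+n_b}(m) = A(n_b, m−1)/n_b!. -/
open scoped Nat

/-- The `1`-indexed value of a permutation `σ` of `{1,…,n}` (encoded on `Fin n`) at a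
`1`-indexed position `i ∈ {1,…,n}`, and `0` outside this range. -/
def permVal (n : ℕ) (σ : Equiv.Perm (Fin n)) (i : ℕ) : ℕ :=
  if h : i - 1 < n ∧ 1 ≤ i then (σ ⟨i - 1, h.1⟩ : ℕ) + 1 else 0

/-- The number of ascents of a permutation `σ` of `{1,…,n}`: the number of indices
`i ∈ {1,…,n−1}` with `σ(i) < σ(i+1)`. -/
def ascentCount (n : ℕ) (σ : Equiv.Perm (Fin n)) : ℕ :=
  ((Finset.Icc 1 (n - 1)).filter fun i => permVal n σ i < permVal n σ (i + 1)).card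

/-- The Eulerian number `A(n,k)`: the number of permutations of `{1,…,n}` with exactly
`k` ascents. -/
def eulerianNumber (n k : ℕ) : ℕ :=
  (Finset.univ.filter fun σ : Equiv.Perm (Fin n) => ascentCount n σ = k).card

namespace MSE
open Finset Equiv Equiv.Perm
variable {n : ℕ}

lemma permVal_of (σ : Equiv.Perm (Fin n)) {p : ℕ} (h1 : 1 ≤ p) (h2 : p ≤ n) :
    permVal n σ p = (σ ⟨p-1, by omega⟩ : ℕ) + 1 := by
  rw [permVal, dif_pos ⟨by omega, h1⟩]

lemma permVal_of_gt (σ : Equiv.Perm (Fin n)) {p : ℕ} (h : n < p) : permVal n σ p = 0 := by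
  rw [permVal, dif_neg]; omega

lemma permVal_zero (σ : Equiv.Perm (Fin n)) : permVal n σ 0 = 0 := by
  rw [permVal, dif_neg]; omega

lemma permVal_le (σ : Equiv.Perm (Fin n)) (p : ℕ) : permVal n σ p ≤ n := by
  rw [permVal]; split
  · exact (σ _).is_lt
  · omega

lemma one_le_permVal (σ : Equiv.Perm (Fin n)) {p : ℕ} (h1 : 1 ≤ p) (h2 : p ≤ n) :
    1 ≤ permVal n σ p := by rw [permVal_of σ h1 h2]; omega

/-- The abstract recurrence-counting lemma. -/
lemma abstract_rec (s : Equiv.Perm (Fin n) → ℕ) (s' : Equiv.Perm (Fin (n+1)) → ℕ)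
    (Φ : Fin (n+1) × Equiv.Perm (Fin n) → Equiv.Perm (Fin (n+1)))
    (hΦ : Function.Bijective Φ)
    (N : Equiv.Perm (Fin n) → Finset (Fin (n+1)))
    (hN : ∀ σ, (N σ).card = s σ + 1)
    (h : ∀ p σ, s' (Φ (p, σ)) = if p ∈ N σ then s σ else s σ + 1) (k : ℕ) :
    ((univ : Finset (Equiv.Perm (Fin (n+1)))).filter fun σ' => s' σ' = k).card
      = (k+1) * ((univ : Finset (Equiv.Perm (Fin n))).filter fun σ => s σ = k).card
        + (n + 1 - k) * ((univ : Finset (Equiv.Perm (Fin n))).filter fun σ => s σ + 1 = k).card := by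
  classical
  let e := Equiv.ofBijective Φ hΦ
  have hΦe : ∀ x, Φ x = e x := fun _ => rfl
  have step1 : ((univ : Finset (Equiv.Perm (Fin (n+1)))).filter fun σ' => s' σ' = k).card
      = ((univ : Finset (Fin (n+1) × Equiv.Perm (Fin n))).filter fun ps => s' (Φ ps) = k).card := by
    apply Finset.card_bij' (fun σ' _ => e.symm σ') (fun ps _ => Φ ps)
    · intro a ha
      simp only [mem_filter, mem_univ, true_and] at ha ⊢
      rw [hΦe, e.apply_symm_apply]; exact ha
    · intro a ha
      simp only [mem_filter, mem_univ, true_and] at ha ⊢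
      exact ha
    · intro a _; exact e.apply_symm_apply a
    · intro a _; rw [hΦe]; exact e.symm_apply_apply a
  rw [step1]
  rw [Finset.card_filter]
  rw [Fintype.sum_prod_type_right]
  have inner : ∀ σ : Equiv.Perm (Fin n),
      (∑ p : Fin (n+1), if s' (Φ (p, σ)) = k then 1 else 0)
        = (k+1) * (if s σ = k then 1 else 0) + (n+1-k) * (if s σ + 1 = k then 1 else 0) := by
    intro σ
    have : ∀ p : Fin (n+1), (if s' (Φ (p, σ)) = k then (1:ℕ) else 0)
        = if p ∈ N σ then (if s σ = k then 1 else 0) else (if s σ + 1 = k then 1 else 0) := by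
      intro p
      rw [h p σ]
      by_cases hp : p ∈ N σ <;> simp [hp]
    rw [Finset.sum_congr rfl fun p _ => this p]
    rw [Finset.sum_ite, Finset.sum_const, Finset.sum_const, smul_eq_mul, smul_eq_mul]
    have h1 : (univ.filter fun p : Fin (n+1) => p ∈ N σ).card = s σ + 1 := by
      rw [Finset.filter_univ_mem]; exact hN σ
    have h2 : (univ.filter fun p : Fin (n+1) => ¬ p ∈ N σ).card = n + 1 - (s σ + 1) := by
      rw [Finset.filter_not, Finset.card_univ_diff, Finset.filter_univ_mem, hN]
      simp
    rw [h1, h2]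
    split_ifs <;> omega
  rw [Finset.sum_congr rfl fun σ _ => inner σ]
  rw [Finset.sum_add_distrib]
  rw [← Finset.mul_sum, ← Finset.mul_sum, ← Finset.card_filter, ← Finset.card_filter]

/-! ### The deficiency statistic -/

def dstat {n : ℕ} (σ : Equiv.Perm (Fin n)) : ℕ := (univ.filter fun i => σ i < i).card

def dM (σ : Equiv.Perm (Fin n)) : Finset (Fin n) := univ.filter fun q => q < σ⁻¹ q

def dN (σ : Equiv.Perm (Fin n)) : Finset (Fin (n+1)) := insert 0 ((dM σ).map (Fin.succEmb n))

lemma card_dM (σ : Equiv.Perm (Fin n)) : (dM σ).card = dstat σ := by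
  apply Finset.card_nbij' (fun q => σ⁻¹ q) (fun i => σ i)
  · intro q hq
    simp only [dM, mem_filter, mem_univ, true_and] at hq ⊢
    simpa using hq
  · intro i hi
    simp only [dM, mem_filter, mem_univ, true_and] at hi ⊢
    simpa using hi
  · intro q _; simp
  · intro i _; simp

lemma card_dN (σ : Equiv.Perm (Fin n)) : (dN σ).card = dstat σ + 1 := by
  rw [dN, Finset.card_insert_of_notMem, Finset.card_map, card_dM]
  simp only [mem_map, not_exists]
  intro q
  simp [Fin.succ_ne_zero q, Fin.succEmb]

lemma dstat_val (σ : Equiv.Perm (Fin n)) : dstat σ = ∑ i : Fin n, if σ i < i then 1 else 0 :=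
  Finset.card_filter _ _

lemma dstat_decomp_zero (σ : Equiv.Perm (Fin n)) :
    dstat (Equiv.Perm.decomposeFin.symm (0, σ)) = dstat σ := by
  rw [dstat_val, dstat_val, Fin.sum_univ_succ]
  simp only [Equiv.Perm.decomposeFin_symm_apply_zero, Equiv.Perm.decomposeFin_symm_apply_succ]
  have h0 : (if (0 : Fin (n+1)) < 0 then 1 else 0) = 0 := by simp
  rw [h0, zero_add]
  apply Finset.sum_congr rfl
  intro i _
  simp [Fin.succ_lt_succ_iff]

lemma dstat_decomp_succ (q : Fin n) (σ : Equiv.Perm (Fin n)) :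
    dstat (Equiv.Perm.decomposeFin.symm (q.succ, σ))
      = if q < σ⁻¹ q then dstat σ else dstat σ + 1 := by
  have key : dstat (Equiv.Perm.decomposeFin.symm (q.succ, σ))
      = 1 + ∑ i ∈ univ.erase (σ⁻¹ q), (if σ i < i then 1 else 0) := by
    rw [dstat_val, Fin.sum_univ_succ]
    simp only [Equiv.Perm.decomposeFin_symm_apply_zero, Equiv.Perm.decomposeFin_symm_apply_succ]
    have h0 : (if (q.succ : Fin (n+1)) < 0 then 1 else 0) = 0 := by simp [Fin.not_lt_zero]
    rw [h0, zero_add]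
    rw [← Finset.add_sum_erase _ _ (Finset.mem_univ (σ⁻¹ q))]
    congr 1
    · rw [show σ (σ⁻¹ q) = q from σ.apply_symm_apply q, Equiv.swap_apply_right]
      simp [Fin.succ_pos]
    · apply Finset.sum_congr rfl
      intro i hi
      have hne : σ i ≠ q := by
        intro hc
        apply Finset.ne_of_mem_erase hi
        rw [← hc, show σ⁻¹ (σ i) = i from σ.symm_apply_apply i]
      rw [Equiv.swap_apply_of_ne_of_ne (Fin.succ_ne_zero _) (by simpa using hne)]
      simp [Fin.succ_lt_succ_iff]
  have key2 : dstat σ = (if q < σ⁻¹ q then 1 else 0)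
      + ∑ i ∈ univ.erase (σ⁻¹ q), (if σ i < i then 1 else 0) := by
    rw [dstat_val, ← Finset.add_sum_erase _ _ (Finset.mem_univ (σ⁻¹ q))]
    congr 1
    rw [show σ (σ⁻¹ q) = q from σ.apply_symm_apply q]
  rw [key, key2]
  split_ifs <;> omega

lemma mem_dN_succ (q : Fin n) (σ : Equiv.Perm (Fin n)) : q.succ ∈ dN σ ↔ q < σ⁻¹ q := by
  simp [dN, dM, Fin.succ_ne_zero, Fin.succ_injective n |>.eq_iff]

lemma dstat_h (p : Fin (n+1)) (σ : Equiv.Perm (Fin n)) :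
    dstat (Equiv.Perm.decomposeFin.symm (p, σ)) = if p ∈ dN σ then dstat σ else dstat σ + 1 := by
  induction p using Fin.cases with
  | zero =>
    rw [if_pos (by simp [dN])]
    exact dstat_decomp_zero σ
  | succ q =>
    rw [dstat_decomp_succ]
    by_cases hq : q < σ⁻¹ q
    · rw [if_pos hq, if_pos ((mem_dN_succ q σ).2 hq)]
    · rw [if_neg hq, if_neg (fun hc => hq ((mem_dN_succ q σ).1 hc))]

/-! ### The ascent statistic -/

def fA (σ : Equiv.Perm (Fin n)) (x : ℕ) : ℕ :=
  if permVal n σ (x+1) < permVal n σ (x+2) then 1 else 0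

def ascStat (n : ℕ) (σ : Equiv.Perm (Fin n)) : ℕ :=
  (univ.filter fun i : Fin n => permVal n σ ((i:ℕ)+1) < permVal n σ ((i:ℕ)+2)).card

lemma ascStat_sum (σ : Equiv.Perm (Fin n)) : ascStat n σ = ∑ x ∈ Finset.range n, fA σ x := by
  rw [ascStat, Finset.card_filter, ← Fin.sum_univ_eq_sum_range (fun x => fA σ x) n]
  rfl

lemma fA_le_one (σ : Equiv.Perm (Fin n)) (x : ℕ) : fA σ x ≤ 1 := by
  rw [fA]; split <;> omega

lemma fA_of_ge (σ : Equiv.Perm (Fin n)) {x : ℕ} (h : n ≤ x + 1) : fA σ x = 0 := by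
  rw [fA, permVal_of_gt σ (by omega : n < x + 2)]
  simp

def aN (σ : Equiv.Perm (Fin n)) : Finset (Fin (n+1)) :=
  univ.filter fun p => (p:ℕ) = n ∨ (1 ≤ (p:ℕ) ∧ fA σ ((p:ℕ)-1) = 1)

lemma card_aN (σ : Equiv.Perm (Fin n)) : (aN σ).card = ascStat n σ + 1 := by
  rw [aN, Finset.card_filter]
  rw [Fin.sum_univ_eq_sum_range
    (fun x => if x = n ∨ (1 ≤ x ∧ fA σ (x-1) = 1) then (1:ℕ) else 0) (n+1)]
  rw [Finset.sum_range_succ, if_pos (Or.inl rfl)]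
  have hc : ∀ x ∈ Finset.range n,
      (if x = n ∨ (1 ≤ x ∧ fA σ (x-1) = 1) then (1:ℕ) else 0)
        = if 1 ≤ x then fA σ (x-1) else 0 := by
    intro x hx
    simp only [Finset.mem_range] at hx
    have := fA_le_one σ (x-1)
    by_cases h1 : 1 ≤ x
    · rw [if_pos h1]
      by_cases h2 : fA σ (x-1) = 1
      · rw [if_pos (Or.inr ⟨h1, h2⟩), h2]
      · rw [if_neg (by omega), ]; omega
    · rw [if_neg h1, if_neg (by omega)]
  rw [Finset.sum_congr rfl hc, ascStat_sum]
  cases n with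
  | zero => simp
  | succ m =>
    rw [Finset.sum_range_succ' (fun x => if 1 ≤ x then fA σ (x-1) else 0) m]
    have he : ∀ i, (if 1 ≤ i+1 then fA σ (i+1-1) else 0) = fA σ i := by
      intro i; rw [if_pos (by omega)]; simp
    rw [Finset.sum_congr rfl (fun i _ => he i), if_neg (by omega : ¬ (1:ℕ) ≤ 0)]
    rw [Finset.sum_range_succ (fA σ) m, fA_of_ge σ (by omega)]

lemma sum_shift (f : ℕ → ℕ) (c : ℕ) (m T : ℕ) (hT : T ≤ m) :
    (∑ x ∈ Finset.range (m+1),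
        (if x+2 ≤ T then f x else if x+1 = T then 0 else if x = T then c else f (x-1)))
      + (if 1 ≤ T then f (T-1) else 0)
    = (∑ x ∈ Finset.range m, f x) + c := by
  induction m with
  | zero =>
    have hT0 : T = 0 := by omega
    subst hT0; simp
  | succ m ih =>
    by_cases hTm : T ≤ m
    · rw [Finset.sum_range_succ _ (m+1)]
      have hlast : (if m+1+2 ≤ T then f (m+1) else if m+1+1 = T then 0
          else if m+1 = T then c else f (m+1-1)) = f m := by
        rw [if_neg (by omega), if_neg (by omega), if_neg (by omega)]
        simp
      rw [hlast, Finset.sum_range_succ f m]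
      have := ih hTm
      omega
    · have hTeq : T = m+1 := by omega
      subst hTeq
      rw [Finset.sum_range_succ _ (m+1), Finset.sum_range_succ _ m]
      have h1 : (if m+1+2 ≤ m+1 then f (m+1) else if m+1+1 = m+1 then 0
          else if m+1 = m+1 then c else f (m+1-1)) = c := by
        rw [if_neg (by omega), if_neg (by omega), if_pos rfl]
      have h2 : (if m+2 ≤ m+1 then f m else if m+1 = m+1 then 0
          else if m = m+1 then c else f (m-1)) = 0 := by
        rw [if_neg (by omega), if_pos rfl]
      rw [h1, h2]
      have hc : ∀ x ∈ Finset.range m,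
          (if x+2 ≤ m+1 then f x else if x+1 = m+1 then 0
            else if x = m+1 then c else f (x-1)) = f x := by
        intro x hx
        simp only [Finset.mem_range] at hx
        rw [if_pos (by omega)]
      rw [Finset.sum_congr rfl hc, Finset.sum_range_succ f m]
      rw [if_pos (by omega : 1 ≤ m+1)]
      simp only [Nat.add_sub_cancel]
      have hs : (Finset.range m).sum f = ∑ x ∈ Finset.range m, f x := rfl
      rw [hs]
      omega

/-! ### The insertion permutation -/

def insPerm (t : Fin (n+1)) (σ : Equiv.Perm (Fin n)) : Equiv.Perm (Fin (n+1)) :=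
  Equiv.Perm.decomposeFin.symm (0, σ) * t.cycleRange

lemma insPerm_apply (t : Fin (n+1)) (σ : Equiv.Perm (Fin n)) (j : Fin (n+1)) :
    insPerm t σ j = Equiv.Perm.decomposeFin.symm (0, σ) (t.cycleRange j) := by
  rw [insPerm, Equiv.Perm.mul_apply]

set_option maxHeartbeats 800000 in
lemma permVal_insPerm (t : Fin (n+1)) (σ : Equiv.Perm (Fin n)) (p : ℕ) :
    permVal (n+1) (insPerm t σ) p =
      if p = 0 ∨ n+1 < p then 0
      else if p = (t:ℕ)+1 then 1
      else if p ≤ (t:ℕ) then permVal n σ p + 1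
      else permVal n σ (p-1) + 1 := by
  have ht := t.is_lt
  by_cases h0 : p = 0 ∨ n+1 < p
  · rw [if_pos h0]
    rcases h0 with h|h
    · subst h; exact permVal_zero _
    · exact permVal_of_gt _ h
  rw [if_neg h0]
  push_neg at h0
  obtain ⟨hp1, hp2⟩ := h0
  have hp1' : 1 ≤ p := Nat.one_le_iff_ne_zero.2 hp1
  rw [permVal_of _ hp1' hp2, insPerm_apply]
  by_cases h1 : p = (t:ℕ)+1
  · rw [if_pos h1]
    have heq : (⟨p-1, by omega⟩ : Fin (n+1)) = t := by
      apply Fin.ext; simp; omega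
    rw [heq, Fin.cycleRange_self]
    simp
  rw [if_neg h1]
  by_cases h2 : p ≤ (t:ℕ)
  · rw [if_pos h2]
    have hlt : (⟨p-1, by omega⟩ : Fin (n+1)) < t := by
      rw [Fin.lt_def]; simp; omega
    have hcr : t.cycleRange ⟨p-1, by omega⟩ = (⟨p-1, by omega⟩ : Fin n).succ := by
      apply Fin.ext
      rw [Fin.coe_cycleRange_of_lt hlt]
      simp
    rw [hcr, Equiv.Perm.decomposeFin_symm_apply_succ]
    rw [permVal_of σ hp1' (by omega)]
    simp
  · rw [if_neg h2]
    have hgt : t < (⟨p-1, by omega⟩ : Fin (n+1)) := by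
      rw [Fin.lt_def]; simp; omega
    have hsucc : (⟨p-1, by omega⟩ : Fin (n+1)) = (⟨p-2, by omega⟩ : Fin n).succ := by
      apply Fin.ext; simp; omega
    rw [Fin.cycleRange_of_gt hgt, hsucc, Equiv.Perm.decomposeFin_symm_apply_succ]
    rw [permVal_of σ (by omega) (by omega)]
    simp only [Equiv.swap_self, Equiv.refl_apply, Fin.val_succ, Nat.add_left_inj]
    congr 1

set_option maxHeartbeats 800000 in
lemma insPerm_bijective :
    Function.Bijective (fun ps : Fin (n+1) × Equiv.Perm (Fin n) => insPerm ps.1 ps.2) := by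
  constructor
  · rintro ⟨t1, σ1⟩ ⟨t2, σ2⟩ hσ
    simp only at hσ
    have ht : ∀ (t : Fin (n+1)) (σ : Equiv.Perm (Fin n)), insPerm t σ t = 0 := by
      intro t σ
      rw [insPerm_apply, Fin.cycleRange_self]
      simp
    have h12 : t1 = t2 := by
      have e1 : insPerm t1 σ1 t1 = 0 := ht t1 σ1
      have e2 : insPerm t1 σ1 t2 = 0 := by rw [hσ]; exact ht t2 σ2
      exact (insPerm t1 σ1).injective (e1.trans e2.symm)
    subst h12
    have hc : Equiv.Perm.decomposeFin.symm (0, σ1) = Equiv.Perm.decomposeFin.symm (0, σ2) :=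
      mul_right_cancel hσ
    have := Equiv.Perm.decomposeFin.symm.injective hc
    simp only [Prod.mk.injEq] at this
    rw [this.2]
  · intro σ'
    set t := σ'⁻¹ 0 with htdef
    set pr := Equiv.Perm.decomposeFin (σ' * (t.cycleRange)⁻¹) with hpr
    have hback : Equiv.Perm.decomposeFin.symm pr = σ' * (t.cycleRange)⁻¹ :=
      Equiv.symm_apply_apply _ _
    have hfst : pr.1 = 0 := by
      have h1 : Equiv.Perm.decomposeFin.symm (pr.1, pr.2) 0 = pr.1 :=
        Equiv.Perm.decomposeFin_symm_apply_zero pr.1 pr.2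
      rw [← h1]
      have hpe : (pr.1, pr.2) = pr := rfl
      rw [hpe, hback, Equiv.Perm.mul_apply]
      have h2 : (t.cycleRange)⁻¹ 0 = t := Fin.cycleRange_symm_zero t
      rw [h2, htdef]
      exact σ'.apply_symm_apply 0
    refine ⟨(t, pr.2), ?_⟩
    simp only [insPerm]
    rw [← hfst]
    have hpe : (pr.1, pr.2) = pr := rfl
    rw [hpe, hback]
    group

lemma fA_insPerm (t : Fin (n+1)) (σ : Equiv.Perm (Fin n)) (x : ℕ) (hx : x ≤ n) :
    fA (insPerm t σ) x =
      if x+2 ≤ (t:ℕ) then fA σ x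
      else if x+1 = (t:ℕ) then 0
      else if x = (t:ℕ) then (if (t:ℕ) < n then 1 else 0)
      else fA σ (x-1) := by
  have ht : (t:ℕ) ≤ n := by omega
  rw [fA, permVal_insPerm, permVal_insPerm]
  by_cases c1 : x+2 ≤ (t:ℕ)
  · rw [if_pos c1, if_neg (by omega : ¬(x+1 = 0 ∨ n+1 < x+1)), if_neg (by omega : ¬(x+1 = (t:ℕ)+1)),
      if_pos (by omega : x+1 ≤ (t:ℕ)), if_neg (by omega : ¬(x+2 = 0 ∨ n+1 < x+2)),
      if_neg (by omega : ¬(x+2 = (t:ℕ)+1)), if_pos c1, fA]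
    split_ifs <;> omega
  rw [if_neg c1]
  by_cases c2 : x+1 = (t:ℕ)
  · rw [if_pos c2, if_neg (by omega : ¬(x+1 = 0 ∨ n+1 < x+1)), if_neg (by omega : ¬(x+1 = (t:ℕ)+1)),
      if_pos (by omega : x+1 ≤ (t:ℕ)), if_neg (by omega : ¬(x+2 = 0 ∨ n+1 < x+2)),
      if_pos (by omega : x+2 = (t:ℕ)+1), if_neg (by omega : ¬(permVal n σ (x+1) + 1 < 1))]
    rw [if_neg c1]
  rw [if_neg c2]
  by_cases c3 : x = (t:ℕ)
  · rw [if_pos c3, if_neg (by omega : ¬(x+1 = 0 ∨ n+1 < x+1)), if_pos (by omega : x+1 = (t:ℕ)+1)]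
    by_cases c4 : (t:ℕ) < n
    · have e1 : x+2-1 = x+1 := by omega
      rw [if_neg (by omega : ¬(x+2 = 0 ∨ n+1 < x+2)), if_neg (by omega : ¬(x+2 = (t:ℕ)+1)),
        if_neg (by omega : ¬(x+2 ≤ (t:ℕ))), e1, if_pos c4]
      have := one_le_permVal σ (by omega : 1 ≤ x+1) (by omega : x+1 ≤ n)
      rw [if_pos (by omega)]
    · rw [if_pos (by omega : x+2 = 0 ∨ n+1 < x+2), if_neg (by omega : ¬((1:ℕ) < 0)), if_neg c4,
        if_neg c1]
  · rw [if_neg c3, if_neg (by omega : ¬(x+1 = 0 ∨ n+1 < x+1)),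
      if_neg (by omega : ¬(x+1 = (t:ℕ)+1)), if_neg (by omega : ¬(x+1 ≤ (t:ℕ)))]
    have e0 : x+1-1 = x := by omega
    rw [e0]
    by_cases c5 : x = n
    · rw [if_pos (by omega : x+2 = 0 ∨ n+1 < x+2), if_neg (by omega : ¬(permVal n σ x + 1 < 0))]
      rw [fA_of_ge σ (by omega : n ≤ (x-1)+1), if_neg c1]
    · have e1 : x+2-1 = x+1 := by omega
      have e2 : x-1+1 = x := by omega
      have e3 : x-1+2 = x+1 := by omega
      rw [if_neg (by omega : ¬(x+2 = 0 ∨ n+1 < x+2)), if_neg (by omega : ¬(x+2 = (t:ℕ)+1)),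
        if_neg (by omega : ¬(x+2 ≤ (t:ℕ))), e1, fA, e2, e3]
      split_ifs <;> omega

lemma ascStat_insPerm (t : Fin (n+1)) (σ : Equiv.Perm (Fin n)) :
    ascStat (n+1) (insPerm t σ) = if t ∈ aN σ then ascStat n σ else ascStat n σ + 1 := by
  have ht : (t:ℕ) ≤ n := by omega
  have key : ascStat (n+1) (insPerm t σ) + (if 1 ≤ (t:ℕ) then fA σ ((t:ℕ)-1) else 0)
      = (∑ x ∈ Finset.range n, fA σ x) + (if (t:ℕ) < n then 1 else 0) := by
    rw [ascStat_sum]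
    rw [← sum_shift (fA σ) (if (t:ℕ) < n then 1 else 0) n (t:ℕ) ht]
    congr 1
    apply Finset.sum_congr rfl
    intro x hx
    simp only [Finset.mem_range] at hx
    exact fA_insPerm t σ x (by omega)
  rw [← ascStat_sum] at key
  have hmem : t ∈ aN σ ↔ ((t:ℕ) = n ∨ (1 ≤ (t:ℕ) ∧ fA σ ((t:ℕ)-1) = 1)) := by
    simp [aN]
  have hle := fA_le_one σ ((t:ℕ)-1)
  by_cases hm : t ∈ aN σ
  · rw [if_pos hm]
    rw [hmem] at hm
    rcases hm with h | ⟨h1, h2⟩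
    · have hz : (if 1 ≤ (t:ℕ) then fA σ ((t:ℕ)-1) else 0) = 0 := by
        by_cases h1 : 1 ≤ (t:ℕ)
        · rw [if_pos h1, fA_of_ge σ (by omega)]
        · rw [if_neg h1]
      rw [hz, if_neg (by omega)] at key
      omega
    · have hlt : (t:ℕ) < n := by
        by_contra hc
        have he : (t:ℕ) = n := by omega
        rw [fA_of_ge σ (by omega)] at h2
        omega
      rw [if_pos h1, h2, if_pos hlt] at key
      omega
  · rw [if_neg hm]
    rw [hmem] at hm
    push_neg at hm
    obtain ⟨h1, h2⟩ := hm
    have hlt : (t:ℕ) < n := by omega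
    rw [if_pos hlt] at key
    by_cases hb : 1 ≤ (t:ℕ)
    · have hz : fA σ ((t:ℕ)-1) = 0 := by have := h2 hb; omega
      rw [if_pos hb, hz] at key
      omega
    · rw [if_neg hb] at key
      omega

/-! ### The two recurrences and the equidistribution -/

lemma dstat_rec (k : ℕ) :
    ((univ : Finset (Equiv.Perm (Fin (n+1)))).filter fun σ' => dstat σ' = k).card
      = (k+1) * ((univ : Finset (Equiv.Perm (Fin n))).filter fun σ => dstat σ = k).card
        + (n + 1 - k) * ((univ : Finset (Equiv.Perm (Fin n))).filter fun σ => dstat σ + 1 = k).card :=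
  abstract_rec dstat dstat (fun ps => Equiv.Perm.decomposeFin.symm ps)
    Equiv.Perm.decomposeFin.symm.bijective dN card_dN (fun p σ => dstat_h p σ) k

lemma ascStat_rec (k : ℕ) :
    ((univ : Finset (Equiv.Perm (Fin (n+1)))).filter fun σ' => ascStat (n+1) σ' = k).card
      = (k+1) * ((univ : Finset (Equiv.Perm (Fin n))).filter fun σ => ascStat n σ = k).card
        + (n + 1 - k) * ((univ : Finset (Equiv.Perm (Fin n))).filter fun σ => ascStat n σ + 1 = k).card :=
  abstract_rec (ascStat n) (ascStat (n+1)) (fun ps => insPerm ps.1 ps.2)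
    insPerm_bijective aN card_aN (fun p σ => ascStat_insPerm p σ) k

lemma counts_eq : ∀ (n k : ℕ),
    ((univ : Finset (Equiv.Perm (Fin n))).filter fun σ => dstat σ = k).card
      = ((univ : Finset (Equiv.Perm (Fin n))).filter fun σ => ascStat n σ = k).card := by
  intro n
  induction n with
  | zero =>
    intro k
    have h : ((univ : Finset (Equiv.Perm (Fin 0))).filter fun σ => dstat σ = k)
        = ((univ : Finset (Equiv.Perm (Fin 0))).filter fun σ => ascStat 0 σ = k) :=
      Finset.filter_congr (fun σ _ => by simp [dstat, ascStat])
    rw [h]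
  | succ m ih =>
    intro k
    rw [dstat_rec, ascStat_rec]
    cases k with
    | zero =>
      have hd : ((univ : Finset (Equiv.Perm (Fin m))).filter fun σ => dstat σ + 1 = 0) = ∅ := by
        apply Finset.filter_false_of_mem; intro σ _; omega
      have ha : ((univ : Finset (Equiv.Perm (Fin m))).filter fun σ => ascStat m σ + 1 = 0) = ∅ := by
        apply Finset.filter_false_of_mem; intro σ _; omega
      rw [hd, ha, ih 0]
    | succ j =>
      have hd : ((univ : Finset (Equiv.Perm (Fin m))).filter fun σ => dstat σ + 1 = j+1)
          = ((univ : Finset (Equiv.Perm (Fin m))).filter fun σ => dstat σ = j) := by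
        apply Finset.filter_congr; intro σ _; omega
      have ha : ((univ : Finset (Equiv.Perm (Fin m))).filter fun σ => ascStat m σ + 1 = j+1)
          = ((univ : Finset (Equiv.Perm (Fin m))).filter fun σ => ascStat m σ = j) := by
        apply Finset.filter_congr; intro σ _; omega
      rw [hd, ha, ih j, ih (j+1)]

/-! ### Identification with the statement's statistics -/

lemma ascentCount_eq (σ : Equiv.Perm (Fin n)) : ascentCount n σ = ascStat n σ := by
  cases n with
  | zero =>
    have h1 : ascentCount 0 σ = 0 := by simp [ascentCount]
    have h2 : ascStat 0 σ = 0 := by simp [ascStat]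
    rw [h1, h2]
  | succ m =>
    rw [ascentCount, ascStat]
    apply Finset.card_nbij' (fun i => (⟨(i-1) % (m+1), Nat.mod_lt _ (by omega)⟩ : Fin (m+1)))
      (fun j => (j:ℕ)+1)
    · intro a ha
      simp only [Finset.mem_coe, Finset.mem_filter, Finset.mem_Icc, Finset.mem_univ, true_and,
        Nat.add_sub_cancel] at ha ⊢
      obtain ⟨⟨ha1, ha2⟩, hcond⟩ := ha
      have hmod : (a-1) % (m+1) = a-1 := Nat.mod_eq_of_lt (by omega)
      simp only [hmod]
      have e1 : a-1+1 = a := by omega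
      have e2 : a-1+2 = a+1 := by omega
      rw [e1, e2]
      exact hcond
    · intro j hj
      simp only [Finset.mem_coe, Finset.mem_filter, Finset.mem_univ, true_and, Finset.mem_Icc,
        Nat.add_sub_cancel] at hj ⊢
      have hjm : (j:ℕ) + 1 ≤ m := by
        by_contra hc
        have hj2 : (j:ℕ) + 2 > m + 1 := by omega
        rw [permVal_of_gt σ (show m+1 < (j:ℕ)+2 by omega)] at hj
        omega
      refine ⟨⟨by omega, hjm⟩, ?_⟩
      have e1 : (j:ℕ)+1+1 = (j:ℕ)+2 := by omega
      rw [e1]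
      exact hj
    · intro a ha
      simp only [Finset.mem_coe, Finset.mem_filter, Finset.mem_Icc, Nat.add_sub_cancel] at ha
      obtain ⟨⟨ha1, ha2⟩, _⟩ := ha
      have hmod : (a-1) % (m+1) = a-1 := Nat.mod_eq_of_lt (by omega)
      simp only [hmod]
      omega
    · intro j _
      apply Fin.ext
      simp only [Nat.add_sub_cancel]
      exact Nat.mod_eq_of_lt j.is_lt

lemma eulerian_eq_asc (k : ℕ) :
    eulerianNumber n k
      = ((univ : Finset (Equiv.Perm (Fin n))).filter fun σ => ascStat n σ = k).card := by
  rw [eulerianNumber]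
  congr 1
  apply Finset.filter_congr
  intro σ _
  rw [ascentCount_eq]

lemma stat_eq_dstat (σ : Equiv.Perm (Fin n)) :
    (univ.filter fun i : Fin n => ((i : ℕ) + 1) + ((σ i : ℕ) + 1) ≤ n).card
      = dstat (σ⁻¹ * Fin.revPerm) := by
  rw [dstat]
  apply Finset.card_nbij' (fun i => (σ i).rev) (fun x => σ⁻¹ (Fin.revPerm x))
  · intro i hi
    simp only [Finset.mem_coe, Finset.mem_filter, Finset.mem_univ, true_and] at hi ⊢
    rw [Equiv.Perm.mul_apply, Fin.revPerm_apply, Fin.rev_rev, show σ⁻¹ (σ i) = i from σ.symm_apply_apply i]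
    rw [Fin.lt_def, Fin.val_rev]
    have := (σ i).is_lt
    omega
  · intro x hx
    simp only [Finset.mem_coe, Finset.mem_filter, Finset.mem_univ, true_and] at hx ⊢
    rw [Equiv.Perm.mul_apply, Fin.revPerm_apply, Fin.lt_def] at hx
    rw [Fin.revPerm_apply, show σ (σ⁻¹ x.rev) = x.rev from σ.apply_symm_apply _, Fin.val_rev]
    have hxl := x.is_lt
    omega
  · intro i _
    simp [Fin.rev_rev]
  · intro x _
    simp [Fin.rev_rev]

lemma stat_count (k : ℕ) :
    ((univ : Finset (Equiv.Perm (Fin n))).filter fun σ =>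
        (univ.filter fun i : Fin n => ((i : ℕ) + 1) + ((σ i : ℕ) + 1) ≤ n).card = k).card
      = ((univ : Finset (Equiv.Perm (Fin n))).filter fun ρ => dstat ρ = k).card := by
  apply Finset.card_nbij' (fun σ => σ⁻¹ * Fin.revPerm) (fun ρ => Fin.revPerm * ρ⁻¹)
  · intro σ hσ
    simp only [Finset.mem_coe, Finset.mem_filter, Finset.mem_univ, true_and] at hσ ⊢
    rw [← stat_eq_dstat]
    exact hσ
  · intro ρ hρ
    simp only [Finset.mem_coe, Finset.mem_filter, Finset.mem_univ, true_and] at hρ ⊢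
    rw [stat_eq_dstat]
    have he : (Fin.revPerm * ρ⁻¹)⁻¹ * Fin.revPerm = ρ := by group
    rw [he]
    exact hρ
  · intro σ _
    group
  · intro ρ _
    group

lemma main_count (n k : ℕ) :
    ((Finset.univ.filter fun σ : Equiv.Perm (Fin n) =>
        (Finset.univ.filter fun i : Fin n =>
          ((i : ℕ) + 1) + ((σ i : ℕ) + 1) ≤ n).card = k).card) = eulerianNumber n k := by
  rw [stat_count, counts_eq, ← eulerian_eq_asc]

end MSE

/-- for `n ≥ 1` and `0 ≤ k ≤ n − 1`, the number of permutations `σ` of `{1,…,n}`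
with exactly `k` indices `i` satisfying `i + σ(i) ≤ n` is the Eulerian number `A(n,k)`.
Consequently, in the 2-race model at the middle score `n_t = 1 + n_b` (threshold condition
`i + σ(i) < n + 1`, i.e. `i + σ(i) ≤ n`), the final-rank probability satisfies
`P_{n_t=1+n_b}(m) = A(n_b, m−1)/n_b!` for `1 ≤ m ≤ n_b + 1`. -/
theorem middle_score_eulerian (n k : ℕ) (hn : 1 ≤ n) (hk : k ≤ n - 1) :
    (Finset.univ.filter fun σ : Equiv.Perm (Fin n) =>
        (Finset.univ.filter fun i : Fin n =>
          ((i : ℕ) + 1) + ((σ i : ℕ) + 1) ≤ n).card = k).card = eulerianNumber n k ∧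
    ∀ m : ℕ, 1 ≤ m → m ≤ n + 1 →
      ((Finset.univ.filter fun σ : Equiv.Perm (Fin n) =>
          (Finset.univ.filter fun i : Fin n =>
            ((i : ℕ) + 1) + ((σ i : ℕ) + 1) < n + 1).card = m - 1).card : ℚ) / (n ! : ℚ) =
        (eulerianNumber n (m - 1) : ℚ) / (n ! : ℚ) := by
  constructor
  · exact MSE.main_count n k
  · intro m _ _
    have hpred : (Finset.univ.filter fun σ : Equiv.Perm (Fin n) =>
          (Finset.univ.filter fun i : Fin n =>
            ((i : ℕ) + 1) + ((σ i : ℕ) + 1) < n + 1).card = m - 1)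
        = (Finset.univ.filter fun σ : Equiv.Perm (Fin n) =>
          (Finset.univ.filter fun i : Fin n =>
            ((i : ℕ) + 1) + ((σ i : ℕ) + 1) ≤ n).card = m - 1) := by
      apply Finset.filter_congr
      intro σ _
      have he : (Finset.univ.filter fun i : Fin n =>
            ((i : ℕ) + 1) + ((σ i : ℕ) + 1) < n + 1)
          = (Finset.univ.filter fun i : Fin n =>
            ((i : ℕ) + 1) + ((σ i : ℕ) + 1) ≤ n) := by
        apply Finset.filter_congr
        intro i _
        simp [Nat.lt_succ_iff]
      rw [he]
    rw [hpred, MSE.main_count n (m-1)]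
end

section
/- Let n ≥ 1 and k ≥ 0. The number of permutations σ of {1,…,n} with exactly k excedances, i.e., exactly k indices i ∈ {1,…,n} with σ(i) > i, is equal to the Eulerian number A(n,k), the number of permutations of {1,…,n} with exactly k ascents. -/
open Finset Equiv

/-! ### Auxiliary definitions -/

def excCount {n : ℕ} (σ : Equiv.Perm (Fin n)) : ℕ :=
  (Finset.univ.filter fun i : Fin n => i < σ i).card

def excNum (n k : ℕ) : ℕ :=
  (Finset.univ.filter fun σ : Equiv.Perm (Fin n) => excCount σ = k).card

/-! ### A splitting lemma for cards of filters -/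

lemma card_filter_split {α : Type*} [DecidableEq α] (s : Finset α) (Q : α → Prop)
    [DecidablePred Q] (a : α) :
    (s.filter Q).card =
      (s.filter fun x => x ≠ a ∧ Q x).card + (if a ∈ s ∧ Q a then 1 else 0) := by
  rw [Finset.card_filter, Finset.card_filter]
  have h : ∀ x ∈ s, (if Q x then (1:ℕ) else 0) =
      (if x ≠ a ∧ Q x then 1 else 0) + (if x = a then (if Q x then 1 else 0) else 0) := by
    intro x _; by_cases hx : x = a <;> by_cases hq : Q x <;> simp [hx, hq]
  rw [Finset.sum_congr rfl h, Finset.sum_add_distrib, Finset.sum_ite_eq']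
  by_cases ha : a ∈ s <;> by_cases hq : Q a <;> simp [ha, hq]

/-! ### The abstract recurrence -/

lemma count_rec {α β : Type*} [Fintype α] [DecidableEq α] [Fintype β] [DecidableEq β] (m : ℕ)
    (F : Fin (m + 1) × α → β) (hF : Function.Bijective F)
    (f : α → ℕ) (g : β → ℕ) (Good : α → Finset (Fin (m + 1)))
    (hcard : ∀ a, (Good a).card = f a + 1)
    (hg : ∀ p a, g (F (p, a)) = if p ∈ Good a then f a else f a + 1) (k : ℕ) :
    (Finset.univ.filter fun b => g b = k).card =
      (k + 1) * (Finset.univ.filter fun a => f a = k).card +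
        (if k = 0 then 0 else
          (m + 1 - k) * (Finset.univ.filter fun a => f a = k - 1).card) := by
  have h1 : (Finset.univ.filter fun b => g b = k).card
      = (Finset.univ.filter fun pa : Fin (m+1) × α => g (F pa) = k).card := by
    refine (Finset.card_nbij F ?_ ?_ ?_).symm
    · intro pa hpa; simp only [Finset.mem_coe, mem_filter, mem_univ, true_and] at hpa ⊢; exact hpa
    · intro x _ y _ hxy; exact hF.1 hxy
    · intro b hb
      obtain ⟨pa, rfl⟩ := hF.2 b
      exact ⟨pa, by simpa using hb, rfl⟩
  rw [h1, Finset.card_filter, ← Finset.univ_product_univ, Finset.sum_product, Finset.sum_comm]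
  have h2 : ∀ a : α, (∑ p : Fin (m+1), if g (F (p, a)) = k then (1:ℕ) else 0)
      = (if f a = k then k + 1 else 0) + (if f a + 1 = k then m + 1 - k else 0) := by
    intro a
    have hpt : ∀ p, (if g (F (p, a)) = k then (1:ℕ) else 0) =
        ((if p ∈ Good a then (if f a = k then (1:ℕ) else 0) else 0)
          + (if p ∈ Good a then 0 else (if f a + 1 = k then (1:ℕ) else 0))) := by
      intro p; rw [hg]; by_cases hp : p ∈ Good a <;> simp [hp]
    rw [Finset.sum_congr rfl fun p _ => hpt p, Finset.sum_add_distrib]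
    rw [Finset.sum_ite_mem, Finset.univ_inter, Finset.sum_const, smul_eq_mul]
    have hpt2 : ∀ p : Fin (m+1), (if p ∈ Good a then (0:ℕ)
        else (if f a + 1 = k then (1:ℕ) else 0))
        = (if p ∈ Finset.univ \ Good a then (if f a + 1 = k then (1:ℕ) else 0) else 0) := by
      intro p; by_cases hp : p ∈ Good a <;> simp [hp]
    rw [Finset.sum_congr rfl fun p _ => hpt2 p, Finset.sum_ite_mem, Finset.univ_inter,
      Finset.sum_const, smul_eq_mul]
    rw [hcard, Finset.card_sdiff_of_subset (Finset.subset_univ _), hcard, Finset.card_univ,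
      Fintype.card_fin]
    by_cases e1 : f a = k <;> by_cases e2 : f a + 1 = k <;> simp [e1, e2] <;> omega
  rw [Finset.sum_congr rfl fun a _ => h2 a, Finset.sum_add_distrib]
  congr 1
  · rw [← Finset.sum_filter, Finset.sum_const, smul_eq_mul, mul_comm]
  · by_cases hk : k = 0
    · subst hk; simp
    · rw [if_neg hk, ← Finset.sum_filter, Finset.sum_const, smul_eq_mul, mul_comm]
      congr 1
      refine congrArg Finset.card (Finset.filter_congr fun a _ => ?_)
      constructor
      · intro h; omega
      · intro h; omega

/-! ### The excedance side -/

def goodE {n : ℕ} (e : Equiv.Perm (Fin n)) : Finset (Fin (n + 1)) :=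
  insert 0 ((Finset.univ.filter fun q : Fin n => e.symm q < q).image Fin.succ)

lemma goodE_card {n : ℕ} (e : Equiv.Perm (Fin n)) : (goodE e).card = excCount e + 1 := by
  rw [goodE, Finset.card_insert_of_notMem, Finset.card_image_of_injective _ (Fin.succ_injective n)]
  · congr 1
    refine Finset.card_nbij (fun q => e.symm q) ?_ ?_ ?_
    · intro q hq
      simp only [Finset.mem_coe, mem_filter, mem_univ, true_and] at hq ⊢
      rw [Equiv.apply_symm_apply]; exact hq
    · intro x _ y _ h; exact e.symm.injective h
    · intro i hi
      simp only [Finset.coe_filter, Set.mem_setOf_eq, mem_univ, true_and] at hi ⊢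
      exact ⟨e i, by simp [hi], by simp⟩
  · simp only [Finset.mem_image]
    rintro ⟨q, -, hq⟩
    exact Fin.succ_ne_zero q hq

lemma excCount_decomp {n : ℕ} (p : Fin (n + 1)) (e : Equiv.Perm (Fin n)) :
    excCount (Equiv.Perm.decomposeFin.symm (p, e)) =
      if p ∈ goodE e then excCount e else excCount e + 1 := by
  rcases eq_or_ne p 0 with rfl | hp
  · have h00 : (0 : Fin (n+1)) ∈ goodE e := Finset.mem_insert_self _ _
    rw [if_pos h00]
    rw [excCount, excCount, Finset.card_filter, Finset.card_filter, Fin.sum_univ_succ]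
    have h0 : ¬ ((0 : Fin (n+1)) < Equiv.Perm.decomposeFin.symm ((0 : Fin (n+1)), e) 0) := by
      rw [Equiv.Perm.decomposeFin_symm_apply_zero]; exact lt_irrefl _
    rw [if_neg h0, zero_add]
    refine Finset.sum_congr rfl fun x _ => ?_
    rw [Equiv.Perm.decomposeFin_symm_apply_succ]
    simp [Fin.succ_lt_succ_iff]
  · set q := p.pred hp with hqdef
    have hq : q.succ = p := Fin.succ_pred p hp
    set x₀ := e.symm q with hx₀
    have h1 : excCount (Equiv.Perm.decomposeFin.symm (p, e)) =
        1 + (Finset.univ.filter fun x : Fin n => x ≠ x₀ ∧ x < e x).card := by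
      rw [excCount, Finset.card_filter, Finset.card_filter, Fin.sum_univ_succ]
      congr 1
      · rw [Equiv.Perm.decomposeFin_symm_apply_zero, if_pos (Fin.pos_of_ne_zero hp)]
      · refine Finset.sum_congr rfl fun x _ => ?_
        rw [Equiv.Perm.decomposeFin_symm_apply_succ]
        by_cases hx : x = x₀
        · subst hx
          have hex : e x₀ = q := by rw [hx₀, Equiv.apply_symm_apply]
          rw [hex, hq, Equiv.swap_apply_right]
          simp [Fin.not_lt_zero]
        · have hne : (e x).succ ≠ p := by
            rw [← hq]
            intro hcontra
            exact hx (by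
              have : e x = q := Fin.succ_injective _ hcontra
              rw [hx₀, ← this, Equiv.symm_apply_apply])
          rw [Equiv.swap_apply_of_ne_of_ne (Fin.succ_ne_zero _) hne]
          simp [Fin.succ_lt_succ_iff, hx]
    have h2 : excCount e =
        (Finset.univ.filter fun x : Fin n => x ≠ x₀ ∧ x < e x).card
          + (if x₀ < q then 1 else 0) := by
      rw [excCount, card_filter_split Finset.univ _ x₀]
      congr 1
      have hex : e x₀ = q := by rw [hx₀, Equiv.apply_symm_apply]
      simp [hex]
    have hmem : p ∈ goodE e ↔ x₀ < q := by
      rw [goodE, Finset.mem_insert]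
      constructor
      · rintro (h | h)
        · exact absurd h hp
        · simp only [Finset.mem_image, mem_filter, mem_univ, true_and] at h
          obtain ⟨q', hq', hq's⟩ := h
          have : q' = q := Fin.succ_injective _ (by rw [hq's, hq])
          rwa [this] at hq'
      · intro h
        right
        simp only [Finset.mem_image, mem_filter, mem_univ, true_and]
        exact ⟨q, h, hq⟩
    by_cases hlt : x₀ < q
    · rw [if_pos hlt] at h2
      rw [if_pos (hmem.2 hlt)]
      omega
    · rw [if_neg hlt] at h2
      rw [if_neg (fun hc => hlt (hmem.1 hc))]
      omega

lemma E_rec (n k : ℕ) :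
    excNum (n + 1) k =
      (k + 1) * excNum n k +
        (if k = 0 then 0 else (n + 1 - k) * excNum n (k - 1)) := by
  exact count_rec n (fun pe => Equiv.Perm.decomposeFin.symm pe)
    (Equiv.bijective _) excCount excCount goodE goodE_card
    (fun p e => excCount_decomp p e) k

/-! ### The ascent side: inserting the largest value at position `p` -/

def insertLast (n : ℕ) (p : Fin (n + 1)) (e : Equiv.Perm (Fin n)) : Equiv.Perm (Fin (n + 1)) :=
  ((finSuccEquiv' p).trans (Equiv.optionCongr e)).trans (finSuccEquiv' (Fin.last n)).symm

lemma insertLast_apply_self (n : ℕ) (p : Fin (n + 1)) (e : Equiv.Perm (Fin n)) :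
    insertLast n p e p = Fin.last n := by
  simp [insertLast, finSuccEquiv'_at]

lemma insertLast_apply_succAbove (n : ℕ) (p : Fin (n + 1)) (e : Equiv.Perm (Fin n)) (i : Fin n) :
    insertLast n p e (p.succAbove i) = (e i).castSucc := by
  simp [insertLast, finSuccEquiv'_succAbove, finSuccEquiv'_symm_some, Fin.succAbove_last]

lemma insertLast_bijective (n : ℕ) :
    Function.Bijective (fun pe : Fin (n + 1) × Equiv.Perm (Fin n) =>
      insertLast n pe.1 pe.2) := by
  rw [Fintype.bijective_iff_injective_and_card]
  refine ⟨?_, by simp [Fintype.card_perm, Nat.factorial_succ, Fintype.card_fin]⟩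
  rintro ⟨p, e⟩ ⟨p', e'⟩ h
  simp only at h
  have hp : p = p' := by
    have h1 := insertLast_apply_self n p e
    have h2 := insertLast_apply_self n p' e'
    rw [h] at h1
    exact (insertLast n p' e').injective (h1.trans h2.symm)
  subst hp
  have he : e = e' := by
    ext i
    have h1 := insertLast_apply_succAbove n p e i
    have h2 := insertLast_apply_succAbove n p e' i
    rw [h] at h1
    have h3 := h1.symm.trans h2
    have h4 := Fin.castSucc_injective n h3
    rw [h4]
  rw [he]

lemma permVal_le (n : ℕ) (e : Equiv.Perm (Fin n)) (j : ℕ) : permVal n e j ≤ n := by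
  rw [permVal]
  split
  · exact Nat.succ_le_of_lt (Fin.is_lt _)
  · exact Nat.zero_le _

lemma permVal_eq (n : ℕ) (e : Equiv.Perm (Fin n)) (j : ℕ) (h1 : 1 ≤ j) (h2 : j ≤ n) :
    permVal n e j = (e ⟨j - 1, by omega⟩ : ℕ) + 1 :=
  dif_pos ⟨by omega, h1⟩

lemma permVal_eq_zero (n : ℕ) (e : Equiv.Perm (Fin n)) (j : ℕ) (h : j = 0 ∨ n < j) :
    permVal n e j = 0 := by
  apply dif_neg
  rintro ⟨h1, h2⟩
  omega

lemma asc_le (n : ℕ) (e : Equiv.Perm (Fin n)) (j : ℕ)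
    (h : permVal n e j < permVal n e (j + 1)) : j + 1 ≤ n := by
  by_contra hc
  rw [permVal_eq_zero n e (j+1) (by omega)] at h
  omega

lemma permVal_insertLast (n : ℕ) (p : Fin (n + 1)) (e : Equiv.Perm (Fin n)) (j : ℕ) :
    permVal (n + 1) (insertLast n p e) j =
      if j ≤ (p : ℕ) then permVal n e j
      else if j = (p : ℕ) + 1 then n + 1
      else permVal n e (j - 1) := by
  have hp : (p : ℕ) ≤ n := by omega
  by_cases h0 : 1 ≤ j ∧ j ≤ n + 1
  · obtain ⟨hj1, hj2⟩ := h0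
    rw [permVal_eq (n+1) _ j hj1 hj2]
    rcases Nat.lt_trichotomy (j - 1) (p : ℕ) with hlt | heq | hgt
    · have hjn : j - 1 < n := by omega
      have hab : (⟨j - 1, by omega⟩ : Fin (n+1)) = p.succAbove ⟨j - 1, hjn⟩ := by
        rw [Fin.succAbove_of_castSucc_lt]
        · rfl
        · rw [Fin.lt_def]; exact hlt
      rw [hab, insertLast_apply_succAbove]
      rw [if_pos (by omega : j ≤ (p:ℕ))]
      rw [permVal_eq n e j hj1 (by omega)]
      simp
    · have hab : (⟨j - 1, by omega⟩ : Fin (n+1)) = p := by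
        apply Fin.ext; exact heq
      rw [hab, insertLast_apply_self]
      rw [if_neg (by omega), if_pos (by omega)]
      simp
    · have hj2' : 2 ≤ j := by omega
      have hjn : j - 2 < n := by omega
      have hab : (⟨j - 1, by omega⟩ : Fin (n+1)) = p.succAbove ⟨j - 2, hjn⟩ := by
        rw [Fin.succAbove_of_le_castSucc]
        · apply Fin.ext; simp [Fin.val_succ]; omega
        · rw [Fin.le_def]; simp; omega
      rw [hab, insertLast_apply_succAbove]
      rw [if_neg (by omega), if_neg (by omega)]
      rw [permVal_eq n e (j-1) (by omega) (by omega)]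
      simp only [Fin.coe_castSucc]
      have hx : (⟨j - 1 - 1, by omega⟩ : Fin n) = ⟨j - 2, hjn⟩ := by
        apply Fin.ext; simp; omega
      rw [hx]
  · have hj : j = 0 ∨ n + 1 < j := by omega
    rw [permVal_eq_zero (n+1) _ j hj]
    rcases hj with rfl | hj
    · rw [if_pos (Nat.zero_le _), permVal_eq_zero n e 0 (Or.inl rfl)]
    · rw [if_neg (by omega), if_neg (by omega), permVal_eq_zero n e (j-1) (by omega)]

lemma ascentCount_eq_Icc (n : ℕ) (hn : 1 ≤ n) (e : Equiv.Perm (Fin n)) :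
    ascentCount n e =
      ((Finset.Icc 1 n).filter fun j => permVal n e j < permVal n e (j + 1)).card := by
  rw [ascentCount]
  congr 1
  have hIcc : Finset.Icc 1 n = insert n (Finset.Icc 1 (n - 1)) := by
    ext j
    simp only [Finset.mem_Icc, Finset.mem_insert]
    omega
  rw [hIcc, Finset.filter_insert]
  rw [if_neg (fun h => by have := asc_le n e n h; omega)]

lemma asc_insertLast (n : ℕ) (hn : 1 ≤ n) (p : Fin (n + 1)) (e : Equiv.Perm (Fin n)) :
    ascentCount (n + 1) (insertLast n p e) =
      if ((p : ℕ) = 0 ∨ permVal n e p < permVal n e ((p : ℕ) + 1)) then ascentCount n e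
      else ascentCount n e + 1 := by
  set P := (p : ℕ) with hP
  have hPn : P ≤ n := by omega
  set σ := insertLast n p e with hσ
  set V : ℕ → ℕ := fun j => permVal n e j with hV
  -- Step A: unfold ascentCount for σ
  have hA : ascentCount (n + 1) σ =
      ((Finset.Icc 1 n).filter fun j => permVal (n+1) σ j < permVal (n+1) σ (j + 1)).card := by
    rw [ascentCount]
    congr 2
  -- Step B: pointwise description
  have hB : ∀ j ∈ Finset.Icc 1 n,
      (permVal (n+1) σ j < permVal (n+1) σ (j + 1)) ↔
        ((j < P ∧ V j < V (j+1)) ∨ (j = P) ∨ (P + 1 < j ∧ V (j-1) < V j)) := by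
    intro j hj
    simp only [Finset.mem_Icc] at hj
    rw [hσ, permVal_insertLast, permVal_insertLast]
    rcases Nat.lt_trichotomy j P with h1 | h1 | h1
    · rw [if_pos (by omega), if_pos (by omega)]
      constructor
      · intro h; exact Or.inl ⟨h1, h⟩
      · rintro (⟨-, h⟩ | h | ⟨h, -⟩) <;> first | exact h | omega
    · rw [if_pos (by omega), if_neg (by omega), if_pos (by omega)]
      have := permVal_le n e j
      constructor
      · intro _; exact Or.inr (Or.inl h1)
      · intro _; omega
    · rcases Nat.lt_or_ge j (P + 2) with h2 | h2
      · -- j = P + 1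
        have hj1 : j = P + 1 := by omega
        rw [if_neg (by omega), if_pos hj1, if_neg (by omega), if_neg (by omega)]
        have h3 := permVal_le n e (j + 1 - 1)
        constructor
        · intro h; omega
        · rintro (⟨h, -⟩ | h | ⟨h, -⟩) <;> omega
      · -- j > P + 1
        rw [if_neg (by omega), if_neg (by omega), if_neg (by omega), if_neg (by omega)]
        have hjj : j + 1 - 1 = j := by omega
        rw [hjj]
        constructor
        · intro h; exact Or.inr (Or.inr ⟨by omega, h⟩)
        · rintro (⟨h, -⟩ | h | ⟨-, h⟩) <;> first | exact h | omega
  rw [hA, Finset.filter_congr hB]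
  -- split the filter of the 3-fold disjunction
  have hsplit : ((Finset.Icc 1 n).filter fun j =>
        ((j < P ∧ V j < V (j+1)) ∨ (j = P) ∨ (P + 1 < j ∧ V (j-1) < V j))).card
      = ((Finset.Icc 1 n).filter fun j => j < P ∧ V j < V (j+1)).card
        + ((Finset.Icc 1 n).filter fun j => j = P).card
        + ((Finset.Icc 1 n).filter fun j => P + 1 < j ∧ V (j-1) < V j).card := by
    have hd2 : Disjoint ((Finset.Icc 1 n).filter fun j => j = P)
        ((Finset.Icc 1 n).filter fun j => P + 1 < j ∧ V (j-1) < V j) := by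
      rw [Finset.disjoint_left]
      intro a ha hb
      simp only [Finset.mem_filter] at ha hb
      omega
    have hd1 : Disjoint ((Finset.Icc 1 n).filter fun j => j < P ∧ V j < V (j+1))
        (((Finset.Icc 1 n).filter fun j => j = P) ∪
          ((Finset.Icc 1 n).filter fun j => P + 1 < j ∧ V (j-1) < V j)) := by
      rw [Finset.disjoint_left]
      intro a ha hb
      simp only [Finset.mem_filter, Finset.mem_union] at ha hb
      rcases hb with hb | hb <;> omega
    rw [Finset.filter_or, Finset.filter_or, Finset.card_union_of_disjoint hd1,
      Finset.card_union_of_disjoint hd2]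
    omega
  rw [hsplit]
  -- middle term
  have hmid : ((Finset.Icc 1 n).filter fun j => j = P).card = if 1 ≤ P then 1 else 0 := by
    rw [Finset.filter_eq']
    by_cases h : P ∈ Finset.Icc 1 n
    · rw [if_pos h, if_pos (by simp only [Finset.mem_Icc] at h; omega)]
      exact Finset.card_singleton _
    · rw [if_neg h, if_neg (by simp only [Finset.mem_Icc] at h; omega)]
      exact Finset.card_empty
  -- third term reindexed
  have hthird : ((Finset.Icc 1 n).filter fun j => P + 1 < j ∧ V (j-1) < V j).card
      = ((Finset.Icc 1 n).filter fun j => P < j ∧ V j < V (j+1)).card := by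
    refine Finset.card_nbij (fun j => j - 1) ?_ ?_ ?_
    · intro j hjj
      simp only [Finset.mem_coe, Finset.mem_filter, Finset.mem_Icc] at hjj ⊢
      obtain ⟨⟨ha, hb⟩, hc, hd⟩ := hjj
      have hd' : V (j - 1) < V (j - 1 + 1) := by
        have : j - 1 + 1 = j := by omega
        rw [this]; exact hd
      exact ⟨⟨by omega, by omega⟩, by omega, hd'⟩
    · intro x hx y hy hxy
      simp only [Finset.coe_filter, Set.mem_setOf_eq, Finset.mem_Icc] at hx hy
      have hxy' : x - 1 = y - 1 := hxy
      omega
    · intro j hjmem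
      simp only [Finset.coe_filter, Set.mem_setOf_eq, Finset.mem_Icc] at hjmem ⊢
      obtain ⟨⟨ha, hb⟩, hc, hd⟩ := hjmem
      have hjn : j + 1 ≤ n := asc_le n e j hd
      refine ⟨j + 1, ⟨⟨by omega, by omega⟩, by omega, ?_⟩, show j + 1 - 1 = j by omega⟩
      have : j + 1 - 1 = j := by omega
      rw [this]; exact hd
  rw [hmid, hthird]
  -- first + third = count of (j ≠ P ∧ asc j)
  have hfirstthird : ((Finset.Icc 1 n).filter fun j => j < P ∧ V j < V (j+1)).card
        + ((Finset.Icc 1 n).filter fun j => P < j ∧ V j < V (j+1)).card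
      = ((Finset.Icc 1 n).filter fun j => j ≠ P ∧ V j < V (j+1)).card := by
    rw [← Finset.card_union_of_disjoint]
    · congr 1
      rw [← Finset.filter_or]
      refine Finset.filter_congr fun j _ => ?_
      constructor
      · rintro (⟨h1, h2⟩ | ⟨h1, h2⟩) <;> exact ⟨by omega, h2⟩
      · rintro ⟨h1, h2⟩
        rcases Nat.lt_or_ge j P with h | h
        · exact Or.inl ⟨h, h2⟩
        · exact Or.inr ⟨by omega, h2⟩
    · rw [Finset.disjoint_left]
      intro a ha hb
      simp only [Finset.mem_filter] at ha hb
      omega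
  -- the base ascent count split at P
  have hbase : ascentCount n e
      = ((Finset.Icc 1 n).filter fun j => j ≠ P ∧ V j < V (j+1)).card
        + (if 1 ≤ P ∧ V P < V (P+1) then 1 else 0) := by
    rw [ascentCount_eq_Icc n hn e, card_filter_split (Finset.Icc 1 n) _ P]
    congr 1
    by_cases h : 1 ≤ P ∧ V P < V (P+1)
    · rw [if_pos h, if_pos ⟨Finset.mem_Icc.mpr ⟨h.1, hPn⟩, h.2⟩]
    · rw [if_neg h]
      rw [if_neg]
      rintro ⟨hmem, hasc⟩
      simp only [Finset.mem_Icc] at hmem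
      exact h ⟨hmem.1, hasc⟩
  -- finish
  have key : ((Finset.Icc 1 n).filter fun j => j < P ∧ V j < V (j+1)).card
        + (if 1 ≤ P then 1 else 0)
        + ((Finset.Icc 1 n).filter fun j => P < j ∧ V j < V (j+1)).card
      = ((Finset.Icc 1 n).filter fun j => j ≠ P ∧ V j < V (j+1)).card
        + (if 1 ≤ P then 1 else 0) := by omega
  rw [key, hbase]
  by_cases h0 : P = 0
  · rw [if_pos (Or.inl h0 : P = 0 ∨ V P < V (P + 1)), if_neg (show ¬ (1 ≤ P) by omega),
      if_neg (show ¬ (1 ≤ P ∧ V P < V (P + 1)) by rintro ⟨h, -⟩; omega)]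
  · by_cases hasc : V P < V (P + 1)
    · rw [if_pos (Or.inr hasc : P = 0 ∨ V P < V (P + 1)), if_pos (show 1 ≤ P by omega),
        if_pos (show 1 ≤ P ∧ V P < V (P + 1) from ⟨by omega, hasc⟩)]
    · rw [if_neg (show ¬ (P = 0 ∨ V P < V (P + 1)) by
          intro hcon
          rcases hcon with h | h
          exact h0 h
          exact hasc h),
        if_pos (show 1 ≤ P by omega),
        if_neg (show ¬ (1 ≤ P ∧ V P < V (P + 1)) by rintro ⟨-, h⟩; exact hasc h)]

def goodA (n : ℕ) (e : Equiv.Perm (Fin n)) : Finset (Fin (n + 1)) :=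
  Finset.univ.filter fun p : Fin (n + 1) =>
    (p : ℕ) = 0 ∨ permVal n e p < permVal n e ((p : ℕ) + 1)

lemma goodA_card (n : ℕ) (hn : 1 ≤ n) (e : Equiv.Perm (Fin n)) :
    (goodA n e).card = ascentCount n e + 1 := by
  have h1 : (goodA n e).card = ((Finset.range (n + 1)).filter fun j =>
      j = 0 ∨ permVal n e j < permVal n e (j + 1)).card := by
    refine Finset.card_nbij (fun p => (p : ℕ)) ?_ ?_ ?_
    · intro p hp
      simp only [Finset.mem_coe, goodA, Finset.mem_filter, Finset.mem_univ, true_and, Finset.mem_range] at hp ⊢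
      exact ⟨p.is_lt, hp⟩
    · intro x _ y _ hxy; exact Fin.val_injective hxy
    · intro j hj
      simp only [Finset.coe_filter, Set.mem_setOf_eq, Finset.mem_range, goodA,
        Finset.mem_univ, true_and] at hj ⊢
      obtain ⟨hj1, hj2⟩ := hj
      exact ⟨⟨j, hj1⟩, hj2, rfl⟩
  rw [h1, card_filter_split (Finset.range (n + 1)) _ 0]
  have h2 : ((Finset.range (n + 1)).filter fun j =>
        j ≠ 0 ∧ (j = 0 ∨ permVal n e j < permVal n e (j + 1))).card
      = ((Finset.Icc 1 n).filter fun j => permVal n e j < permVal n e (j + 1)).card := by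
    congr 1
    ext j
    simp only [Finset.mem_filter, Finset.mem_range, Finset.mem_Icc]
    constructor
    · rintro ⟨h1, h2, (h3 | h3)⟩
      · omega
      · exact ⟨⟨by omega, by omega⟩, h3⟩
    · rintro ⟨⟨h1, h2⟩, h3⟩
      exact ⟨by omega, by omega, Or.inr h3⟩
  rw [h2, ← ascentCount_eq_Icc n hn e]
  rw [if_pos ⟨Finset.mem_range.mpr (by omega), Or.inl rfl⟩]

lemma A_rec (n k : ℕ) (hn : 1 ≤ n) :
    eulerianNumber (n + 1) k =
      (k + 1) * eulerianNumber n k +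
        (if k = 0 then 0 else (n + 1 - k) * eulerianNumber n (k - 1)) := by
  exact count_rec n (fun pe => insertLast n pe.1 pe.2) (insertLast_bijective n)
    (ascentCount n) (ascentCount (n + 1)) (goodA n) (goodA_card n hn)
    (fun p e => by
      rw [asc_insertLast n hn p e]
      simp only [goodA, Finset.mem_filter, Finset.mem_univ, true_and]) k

lemma base_case (k : ℕ) : excNum 1 k = eulerianNumber 1 k := by
  have h1 : ∀ σ : Equiv.Perm (Fin 1), excCount σ = 0 := by
    intro σ
    rw [excCount, Finset.card_eq_zero]
    ext i
    simp only [Finset.mem_filter, Finset.mem_univ, true_and, Finset.notMem_empty, iff_false]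
    have : σ i = i := Subsingleton.elim _ _
    rw [this]
    exact lt_irrefl i
  have h2 : ∀ σ : Equiv.Perm (Fin 1), ascentCount 1 σ = 0 := by
    intro σ
    rw [ascentCount]
    norm_num
  rw [excNum, eulerianNumber]
  congr 1

lemma main_eq : ∀ n, 1 ≤ n → ∀ k, excNum n k = eulerianNumber n k := by
  intro n
  induction n with
  | zero => intro h; omega
  | succ m ih =>
    intro _ k
    rcases Nat.eq_zero_or_pos m with rfl | hm
    · exact base_case k
    · rw [E_rec m k, A_rec m k hm, ih hm k, ih hm (k - 1)]

/-- excedances are an Eulerian statistic.  For `n ≥ 1` and any `k`, the number of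
permutations `σ` of `{1,…,n}` with exactly `k` excedances (indices `i` with `σ(i) > i`) equals
the Eulerian number `A(n,k)`. -/
theorem excedance_eulerian (n k : ℕ) (hn : 1 ≤ n) :
    (Finset.univ.filter fun σ : Equiv.Perm (Fin n) =>
        (Finset.univ.filter fun i : Fin n => (σ i : ℕ) + 1 > (i : ℕ) + 1).card = k).card =
      eulerianNumber n k := by
  have h : ∀ σ : Equiv.Perm (Fin n),
      (Finset.univ.filter fun i : Fin n => (σ i : ℕ) + 1 > (i : ℕ) + 1)
        = (Finset.univ.filter fun i : Fin n => i < σ i) := by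
    intro σ
    refine Finset.filter_congr fun i _ => ?_
    rw [Fin.lt_def]
    omega
  have h2 : (Finset.univ.filter fun σ : Equiv.Perm (Fin n) =>
      (Finset.univ.filter fun i : Fin n => (σ i : ℕ) + 1 > (i : ℕ) + 1).card = k).card
      = excNum n k := by
    rw [excNum]
    congr 1
    exact Finset.filter_congr fun σ _ => by rw [h σ, excCount]
  rw [h2]
  exact main_eq n hn k
end

section
/- Let n ≥ 1 and 0 ≤ k ≤ n − 1. The Eulerian number A(n,k) and the Stirling numbers of the second kind are related by A(n,k) = Σ_{j=1}^{k+1} (−1)^{k−j+1} · C(n−j, n−k−1) · j! · S(n,j), where C(n−j, n−k−1) is a binomial coefficient. -/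
open scoped Nat

/-- The Stirling number of the second kind `S(n,k)`: the number of partitions of the set
`{1,…,n}` (encoded as `Fin n`) into exactly `k` nonempty blocks. -/
def stirlingSnd (n k : ℕ) : ℕ :=
  (Finset.univ.filter fun P : Finpartition (Finset.univ : Finset (Fin n)) =>
    P.parts.card = k).card

namespace ESAux

open Finset Function


/-! ### generic strict mono from adjacent -/

lemma strictMono_of_adj {α : Type*} [Preorder α] {n : ℕ} {f : Fin n → α}
    (h : ∀ p, (hp : p + 1 < n) → f ⟨p, by omega⟩ < f ⟨p + 1, hp⟩) : StrictMono f := by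
  have key : ∀ q (hq : q < n), ∀ p (hp : p < n), p < q → f ⟨p, hp⟩ < f ⟨q, hq⟩ := by
    intro q
    induction q with
    | zero => omega
    | succ q ih =>
      intro hq p hp hpq
      rcases eq_or_lt_of_le (Nat.lt_succ_iff.1 hpq) with rfl | h'
      · exact h p hq
      · exact (ih (by omega) p hp h').trans (h q hq)
  intro i j hij
  have := key j j.isLt i i.isLt hij
  simpa using this

/-! ### cutCount -/

def cutCount (C : Finset ℕ) (y : ℕ) : ℕ := (C.filter (· < y)).card

lemma cutCount_zero (C : Finset ℕ) : cutCount C 0 = 0 := by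
  simp [cutCount]

lemma cutCount_succ (C : Finset ℕ) (p : ℕ) :
    cutCount C (p + 1) = cutCount C p + (if p ∈ C then 1 else 0) := by
  unfold cutCount
  by_cases hp : p ∈ C
  · rw [if_pos hp]
    have : C.filter (· < p + 1) = insert p (C.filter (· < p)) := by
      ext x
      simp only [mem_filter, mem_insert]
      constructor
      · rintro ⟨hx, hlt⟩
        rcases Nat.lt_succ_iff_lt_or_eq.1 hlt with h | rfl
        · exact Or.inr ⟨hx, h⟩
        · exact Or.inl rfl
      · rintro (rfl | ⟨hx, hlt⟩)
        · exact ⟨hp, Nat.lt_succ_self _⟩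
        · exact ⟨hx, hlt.trans (Nat.lt_succ_self _)⟩
    rw [this, card_insert_of_notMem (by simp)]
  · rw [if_neg hp]
    have : C.filter (· < p + 1) = C.filter (· < p) := by
      ext x
      simp only [mem_filter]
      constructor
      · rintro ⟨hx, hlt⟩
        refine ⟨hx, ?_⟩
        rcases Nat.lt_succ_iff_lt_or_eq.1 hlt with h | rfl
        · exact h
        · exact absurd hx hp
      · rintro ⟨hx, hlt⟩
        exact ⟨hx, hlt.trans (Nat.lt_succ_self _)⟩
    rw [this]
    omega

lemma cutCount_le (C : Finset ℕ) (y : ℕ) : cutCount C y ≤ C.card :=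
  card_le_card (filter_subset _ _)

lemma cutCount_mono (C : Finset ℕ) : Monotone (cutCount C) := by
  intro a b hab
  exact card_le_card (fun x hx => by
    simp only [mem_filter] at hx ⊢
    exact ⟨hx.1, lt_of_lt_of_le hx.2 hab⟩)

lemma cutCount_eq_card (C : Finset ℕ) (m : ℕ) (h : ∀ x ∈ C, x < m) :
    cutCount C m = C.card := by
  unfold cutCount
  rw [filter_true_of_mem]
  intro x hx
  exact h x hx

lemma cutCount_exists (C : Finset ℕ) (m : ℕ) :
    ∀ v ≤ cutCount C m, ∃ p ≤ m, cutCount C p = v := by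
  induction m with
  | zero =>
    intro v hv
    rw [cutCount_zero] at hv
    exact ⟨0, le_refl _, by rw [cutCount_zero]; omega⟩
  | succ m ih =>
    intro v hv
    by_cases h : v ≤ cutCount C m
    · obtain ⟨p, hp, hpv⟩ := ih v h
      exact ⟨p, by omega, hpv⟩
    · refine ⟨m + 1, le_refl _, ?_⟩
      have := cutCount_succ C m
      split at this <;> omega



variable {n j : ℕ}

def key (f : Fin n → Fin j) : Fin n → Lex (Fin j × (Fin n)ᵒᵈ) :=
  fun x => toLex (f x, OrderDual.toDual x)

lemma key_lt_iff {f : Fin n → Fin j} {x y : Fin n} :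
    key f x < key f y ↔ f x < f y ∨ (f x = f y ∧ y < x) := by
  unfold key
  rw [Prod.Lex.lt_iff]
  simp

lemma key_injective (f : Fin n → Fin j) : Function.Injective (key f) := by
  intro x y h
  unfold key at h
  have := congrArg (fun z => (ofLex z).2) h
  simpa using this

def sortPerm (f : Fin n → Fin j) : Equiv.Perm (Fin n) := Tuple.sort (key f)

lemma sortPerm_eq_iff {f : Fin n → Fin j} {σ : Equiv.Perm (Fin n)} :
    σ = sortPerm f ↔ ∀ p, (hp : p + 1 < n) →
      key f (σ ⟨p, by omega⟩) < key f (σ ⟨p + 1, hp⟩) := by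
  rw [sortPerm, Tuple.eq_sort_iff]
  constructor
  · rintro ⟨hm, -⟩ p hp
    have h1 : (⟨p, by omega⟩ : Fin n) < ⟨p + 1, hp⟩ := by simp [Fin.lt_def]
    rcases (hm h1.le).lt_or_eq with h | h
    · exact h
    · exfalso
      have := key_injective f h
      have := σ.injective this
      simp [Fin.ext_iff] at this
  · intro h
    have hsm : StrictMono (key f ∘ σ) := strictMono_of_adj (f := key f ∘ σ) h
    refine ⟨hsm.monotone, fun a b hab hfe => ?_⟩
    exfalso
    exact absurd (σ.injective (key_injective f hfe)) hab.ne

lemma sortPerm_adj {f : Fin n → Fin j} {σ : Equiv.Perm (Fin n)} (hσ : σ = sortPerm f)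
    {p : ℕ} (hp : p + 1 < n) :
    f (σ ⟨p, by omega⟩) < f (σ ⟨p + 1, hp⟩) ∨
      (f (σ ⟨p, by omega⟩) = f (σ ⟨p + 1, hp⟩) ∧ σ ⟨p + 1, hp⟩ < σ ⟨p, by omega⟩) :=
  key_lt_iff.1 (sortPerm_eq_iff.1 hσ p hp)

lemma sortPerm_mono {f : Fin n → Fin j} {x y : Fin n} (hxy : x ≤ y) :
    f (sortPerm f x) ≤ f (sortPerm f y) := by
  rcases hxy.lt_or_eq with h | rfl
  · have hsm : StrictMono (key f ∘ sortPerm f) :=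
      strictMono_of_adj (f := key f ∘ sortPerm f)
        (fun p hp => sortPerm_eq_iff.1 rfl p hp)
    have := hsm h
    rcases key_lt_iff.1 this with h' | ⟨h', -⟩
    · exact h'.le
    · exact h'.le
  · exact le_refl _

def wordP (n : ℕ) (σ : Equiv.Perm (Fin n)) (p : ℕ) : ℕ :=
  if h : p < n then (σ ⟨p, h⟩ : ℕ) + 1 else 0

def aSet (n : ℕ) (σ : Equiv.Perm (Fin n)) : Finset ℕ :=
  (range (n - 1)).filter fun p => wordP n σ p < wordP n σ (p + 1)

def wordF (f : Fin n → Fin j) (σ : Equiv.Perm (Fin n)) (p : ℕ) : ℕ :=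
  if h : p < n then (f (σ ⟨p, h⟩) : ℕ) + 1 else 0

def cSet (f : Fin n → Fin j) (σ : Equiv.Perm (Fin n)) : Finset ℕ :=
  (range (n - 1)).filter fun p => wordF f σ p ≠ wordF f σ (p + 1)

lemma mem_aSet_iff {σ : Equiv.Perm (Fin n)} {p : ℕ} (hp : p + 1 < n) :
    p ∈ aSet n σ ↔ σ ⟨p, by omega⟩ < σ ⟨p + 1, hp⟩ := by
  unfold aSet wordP
  rw [mem_filter, mem_range, dif_pos (show p < n by omega), dif_pos hp]
  simp only [Fin.lt_def]
  omega

lemma mem_aSet_bound {σ : Equiv.Perm (Fin n)} {p : ℕ} (hp : p ∈ aSet n σ) : p + 1 < n := by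
  have := mem_range.1 (mem_of_mem_filter _ hp)
  omega

lemma mem_cSet_iff {f : Fin n → Fin j} {σ : Equiv.Perm (Fin n)} {p : ℕ} (hp : p + 1 < n) :
    p ∈ cSet f σ ↔ f (σ ⟨p, by omega⟩) ≠ f (σ ⟨p + 1, hp⟩) := by
  unfold cSet wordF
  rw [mem_filter, mem_range, dif_pos (show p < n by omega), dif_pos hp]
  simp only [Fin.ext_iff, ne_eq]
  omega

lemma mem_cSet_bound {f : Fin n → Fin j} {σ : Equiv.Perm (Fin n)} {p : ℕ}
    (hp : p ∈ cSet f σ) : p + 1 < n := by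
  have := mem_range.1 (mem_of_mem_filter _ hp)
  omega

lemma cSet_subset_range (f : Fin n → Fin j) (σ : Equiv.Perm (Fin n)) :
    cSet f σ ⊆ range (n - 1) := filter_subset _ _

lemma reconstruct {f : Fin n → Fin j} (hj : 0 < j) (hf : Surjective f) :
    ∀ p, (hp : p < n) →
      (f (sortPerm f ⟨p, hp⟩) : ℕ) = cutCount (cSet f (sortPerm f)) p := by
  intro p
  induction p with
  | zero =>
    intro hp
    rw [cutCount_zero]
    obtain ⟨x, hx⟩ := hf ⟨0, hj⟩
    have h1 : f (sortPerm f ⟨0, hp⟩) ≤ f (sortPerm f ((sortPerm f).symm x)) :=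
      sortPerm_mono (by simp [Fin.le_def])
    rw [Equiv.apply_symm_apply, hx] at h1
    have := Fin.le_def.1 h1
    simpa using this
  | succ p ih =>
    intro hp
    have hp' : p < n := by omega
    have ihp := ih hp'
    rw [cutCount_succ]
    by_cases hmem : p ∈ cSet f (sortPerm f)
    · rw [if_pos hmem]
      have hne : f (sortPerm f ⟨p, hp'⟩) ≠ f (sortPerm f ⟨p + 1, hp⟩) :=
        (mem_cSet_iff hp).1 hmem
      have hle : f (sortPerm f ⟨p, hp'⟩) ≤ f (sortPerm f ⟨p + 1, hp⟩) :=
        sortPerm_mono (by simp [Fin.le_def])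
      have hlt : (f (sortPerm f ⟨p, hp'⟩) : ℕ) < (f (sortPerm f ⟨p + 1, hp⟩) : ℕ) :=
        Fin.lt_def.1 (lt_of_le_of_ne hle hne)
      have hbound : (f (sortPerm f ⟨p + 1, hp⟩) : ℕ) ≤ (f (sortPerm f ⟨p, hp'⟩) : ℕ) + 1 := by
        by_contra hgap
        push_neg at hgap
        have hvlt : (f (sortPerm f ⟨p, hp'⟩) : ℕ) + 1 < j := by
          have := (f (sortPerm f ⟨p + 1, hp⟩)).isLt
          omega
        obtain ⟨x, hx⟩ := hf ⟨(f (sortPerm f ⟨p, hp'⟩) : ℕ) + 1, hvlt⟩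
        rcases le_or_gt ((sortPerm f).symm x) ⟨p, hp'⟩ with h | h
        · have h2 := sortPerm_mono (f := f) h
          rw [Equiv.apply_symm_apply, hx] at h2
          have := Fin.le_def.1 h2
          simp at this
        · have h3 : (⟨p + 1, hp⟩ : Fin n) ≤ (sortPerm f).symm x := by
            rw [Fin.lt_def] at h
            rw [Fin.le_def]
            simp only at h ⊢
            omega
          have h2 := sortPerm_mono (f := f) h3
          rw [Equiv.apply_symm_apply, hx] at h2
          have := Fin.le_def.1 h2
          simp at this
          omega
      omega
    · rw [if_neg hmem]
      have heq : f (sortPerm f ⟨p, hp'⟩) = f (sortPerm f ⟨p + 1, hp⟩) := by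
        by_contra hne
        exact hmem ((mem_cSet_iff hp).2 hne)
      rw [← heq, ihp]
      omega

set_option maxHeartbeats 1000000 in
lemma cSet_card {f : Fin n → Fin j} (hn : 1 ≤ n) (hj : 0 < j) (hf : Surjective f) :
    (cSet f (sortPerm f)).card = j - 1 := by
  have hlast := reconstruct hj hf (n - 1) (by omega)
  have hC : ∀ x ∈ cSet f (sortPerm f), x < n - 1 := fun x hx =>
    mem_range.1 (mem_of_mem_filter _ hx)
  rw [cutCount_eq_card _ _ hC] at hlast
  obtain ⟨x, hx⟩ := hf ⟨j - 1, by omega⟩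
  have h1 : f (sortPerm f ((sortPerm f).symm x)) ≤ f (sortPerm f ⟨n - 1, by omega⟩) := by
    apply sortPerm_mono
    rw [Fin.le_def]
    have := ((sortPerm f).symm x).isLt
    simp only
    omega
  rw [Equiv.apply_symm_apply, hx] at h1
  have h2 := Fin.le_def.1 h1
  have h3 := (f (sortPerm f ⟨n - 1, by omega⟩)).isLt
  simp only at h2
  omega

lemma aSet_subset_cSet {f : Fin n → Fin j} : aSet n (sortPerm f) ⊆ cSet f (sortPerm f) := by
  intro p hp
  have hpr : p + 1 < n := mem_aSet_bound hp
  have hasc := (mem_aSet_iff hpr).1 hp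
  rw [mem_cSet_iff hpr]
  rcases sortPerm_adj rfl hpr with h | ⟨he, hlt⟩
  · exact h.ne
  · exact absurd hasc (asymm hlt)

def buildF (hj : 0 < j) (σ : Equiv.Perm (Fin n)) (C : Finset ℕ) : Fin n → Fin j :=
  fun x => ⟨min (cutCount C (σ.symm x)) (j - 1), by omega⟩

lemma buildF_apply (hj : 0 < j) (σ : Equiv.Perm (Fin n)) (C : Finset ℕ)
    (hC : C.card ≤ j - 1) (x : Fin n) :
    (buildF hj σ C x : ℕ) = cutCount C (σ.symm x) := by
  unfold buildF
  simp only
  exact min_eq_left ((cutCount_le _ _).trans hC)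

lemma buildF_at (hj : 0 < j) (σ : Equiv.Perm (Fin n)) (C : Finset ℕ)
    (hC : C.card ≤ j - 1) (p : ℕ) (hp : p < n) :
    (buildF hj σ C (σ ⟨p, hp⟩) : ℕ) = cutCount C p := by
  rw [buildF_apply hj σ C hC, Equiv.symm_apply_apply]

lemma sortPerm_buildF (hj : 0 < j) (σ : Equiv.Perm (Fin n)) (C : Finset ℕ)
    (hC : C.card = j - 1) (hCa : aSet n σ ⊆ C) :
    σ = sortPerm (buildF hj σ C) := by
  rw [sortPerm_eq_iff]
  intro p hp
  rw [key_lt_iff]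
  have hp' : p < n := by omega
  have h1 := buildF_at hj σ C hC.le p hp'
  have h2 := buildF_at hj σ C hC.le (p + 1) hp
  by_cases hm : p ∈ C
  · left
    rw [Fin.lt_def, h1, h2, cutCount_succ, if_pos hm]
    omega
  · right
    constructor
    · apply Fin.ext
      rw [h1, h2, cutCount_succ, if_neg hm]
      omega
    · have hna : p ∉ aSet n σ := fun h => hm (hCa h)
      have hne : σ ⟨p, hp'⟩ ≠ σ ⟨p + 1, hp⟩ := by
        intro h
        have := σ.injective h
        simp [Fin.ext_iff] at this
      rcases lt_trichotomy (σ ⟨p, hp'⟩) (σ ⟨p + 1, hp⟩) with h | h | h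
      · exact absurd ((mem_aSet_iff hp).2 h) hna
      · exact absurd h hne
      · exact h

lemma buildF_surjective (hn : 1 ≤ n) (hj : 0 < j) (σ : Equiv.Perm (Fin n)) (C : Finset ℕ)
    (hC : C.card = j - 1) (hCr : C ⊆ range (n - 1)) :
    Surjective (buildF hj σ C) := by
  intro v
  have hCc : cutCount C (n - 1) = C.card :=
    cutCount_eq_card _ _ (fun x hx => mem_range.1 (hCr hx))
  have hv : (v : ℕ) ≤ cutCount C (n - 1) := by
    rw [hCc, hC]
    have := v.isLt
    omega
  obtain ⟨p, hpm, hpv⟩ := cutCount_exists C (n - 1) v hv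
  have hpn : p < n := by omega
  refine ⟨σ ⟨p, hpn⟩, ?_⟩
  apply Fin.ext
  rw [buildF_at hj σ C hC.le p hpn, hpv]

lemma cSet_buildF (hj : 0 < j) (σ : Equiv.Perm (Fin n)) (C : Finset ℕ)
    (hC : C.card = j - 1) (hCr : C ⊆ range (n - 1)) :
    cSet (buildF hj σ C) σ = C := by
  ext p
  constructor
  · intro hp
    have hpr : p + 1 < n := mem_cSet_bound hp
    have hne := (mem_cSet_iff hpr).1 hp
    by_contra hm
    apply hne
    apply Fin.ext
    rw [buildF_at hj σ C hC.le p (by omega), buildF_at hj σ C hC.le (p + 1) hpr,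
      cutCount_succ, if_neg hm]
    omega
  · intro hp
    have hpr : p + 1 < n := by
      have := mem_range.1 (hCr hp)
      omega
    rw [mem_cSet_iff hpr]
    intro he
    have := congrArg Fin.val he
    rw [buildF_at hj σ C hC.le p (by omega), buildF_at hj σ C hC.le (p + 1) hpr,
      cutCount_succ, if_pos hp] at this
    omega

lemma buildF_reconstruct (hn : 1 ≤ n) (hj : 0 < j) {f : Fin n → Fin j} (hf : Surjective f) :
    buildF hj (sortPerm f) (cSet f (sortPerm f)) = f := by
  funext x
  apply Fin.ext
  rw [buildF_apply hj _ _ (cSet_card hn hj hf).le]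
  have hp : ((sortPerm f).symm x : ℕ) < n := Fin.isLt _
  have h := reconstruct hj hf ((sortPerm f).symm x) hp
  simp only [Fin.eta, Equiv.apply_symm_apply] at h
  exact h.symm

lemma wordP_eq_permVal (σ : Equiv.Perm (Fin n)) (p : ℕ) :
    wordP n σ p = permVal n σ (p + 1) := by
  by_cases h : p < n <;> simp [wordP, permVal, h]

lemma aSet_card_eq (σ : Equiv.Perm (Fin n)) : (aSet n σ).card = ascentCount n σ := by
  unfold ascentCount
  apply Finset.card_bij (fun p _ => p + 1)
  · intro a ha
    simp only [aSet, mem_filter, mem_range] at ha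
    simp only [mem_filter, mem_Icc]
    refine ⟨⟨by omega, by omega⟩, ?_⟩
    have e1 := wordP_eq_permVal σ a
    have e2 := wordP_eq_permVal σ (a + 1)
    rw [e1, e2] at ha
    exact ha.2
  · intro a _ b _ hab
    omega
  · intro b hb
    simp only [mem_filter, mem_Icc] at hb
    refine ⟨b - 1, ?_, by omega⟩
    simp only [aSet, mem_filter, mem_range]
    have hb1 : b - 1 + 1 = b := by omega
    rw [wordP_eq_permVal, wordP_eq_permVal, hb1]
    exact ⟨by omega, hb.2⟩

lemma ascentCount_le (σ : Equiv.Perm (Fin n)) : ascentCount n σ ≤ n - 1 := by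
  unfold ascentCount
  calc _ ≤ (Finset.Icc 1 (n - 1)).card := card_filter_le _ _
    _ = n - 1 := by rw [Nat.card_Icc]; omega

lemma card_between (A S : Finset ℕ) (hAS : A ⊆ S) (m : ℕ) (hm : A.card ≤ m) :
    ((S.powersetCard m).filter fun C => A ⊆ C).card
      = (S.card - A.card).choose (m - A.card) := by
  rw [← card_sdiff_of_subset hAS, ← Finset.card_powersetCard]
  apply card_bij (fun C _ => C \ A)
  · intro C hC
    simp only [mem_filter, mem_powersetCard] at hC ⊢
    obtain ⟨⟨hCS, hCc⟩, hAC⟩ := hC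
    constructor
    · intro x hx
      rw [mem_sdiff] at hx ⊢
      exact ⟨hCS hx.1, hx.2⟩
    · rw [card_sdiff_of_subset hAC, hCc]
  · intro C hC C' hC' h
    simp only [mem_filter, mem_powersetCard] at hC hC'
    ext x
    constructor
    · intro hx
      by_cases hxA : x ∈ A
      · exact hC'.2 hxA
      · have : x ∈ C \ A := mem_sdiff.2 ⟨hx, hxA⟩
        rw [h, mem_sdiff] at this
        exact this.1
    · intro hx
      by_cases hxA : x ∈ A
      · exact hC.2 hxA
      · have : x ∈ C' \ A := mem_sdiff.2 ⟨hx, hxA⟩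
        rw [← h, mem_sdiff] at this
        exact this.1
  · intro D hD
    rw [mem_powersetCard] at hD
    refine ⟨D ∪ A, ?_, ?_⟩
    · simp only [mem_filter, mem_powersetCard]
      refine ⟨⟨?_, ?_⟩, subset_union_right⟩
      · intro x hx
        rcases mem_union.1 hx with h | h
        · have := hD.1 h
          rw [mem_sdiff] at this
          exact this.1
        · exact hAS h
      · rw [card_union_of_disjoint (Finset.disjoint_left.2 fun x hxD hxA => by
            have := hD.1 hxD
            rw [mem_sdiff] at this
            exact absurd hxA this.2), hD.2]
        omega
    · ext x
      rw [mem_sdiff, mem_union]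
      constructor
      · rintro ⟨h | h, hA⟩
        · exact h
        · exact absurd h hA
      · intro hx
        have := hD.1 hx
        rw [mem_sdiff] at this
        exact ⟨Or.inl hx, this.2⟩

set_option maxHeartbeats 1000000 in
lemma fiber_card (hn : 1 ≤ n) (hj : 0 < j) (hjn : j ≤ n) (σ : Equiv.Perm (Fin n)) :
    (((univ : Finset (Fin n → Fin j)).filter fun f => Surjective f).filter
      fun f => sortPerm f = σ).card = (n - 1 - ascentCount n σ).choose (n - j) := by
  have hsub : aSet n σ ⊆ range (n - 1) := filter_subset _ _
  have hacard : (aSet n σ).card = ascentCount n σ := aSet_card_eq σ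
  have ha : ascentCount n σ ≤ n - 1 := ascentCount_le σ
  have hmain : (((univ : Finset (Fin n → Fin j)).filter fun f => Surjective f).filter
      fun f => sortPerm f = σ).card
      = (((range (n - 1)).powersetCard (j - 1)).filter fun C => aSet n σ ⊆ C).card := by
    apply card_bij' (fun f _ => cSet f σ) (fun C _ => buildF hj σ C)
    · intro f hf
      rw [mem_filter, mem_filter] at hf
      obtain ⟨⟨-, hsurj⟩, hσ⟩ := hf
      subst hσ
      simp only [mem_filter, mem_powersetCard]
      exact ⟨⟨cSet_subset_range f _, cSet_card hn hj hsurj⟩, aSet_subset_cSet⟩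
    · intro C hC
      simp only [mem_filter, mem_powersetCard] at hC
      obtain ⟨⟨hCr, hCc⟩, hCa⟩ := hC
      rw [mem_filter, mem_filter]
      exact ⟨⟨mem_univ _, buildF_surjective hn hj σ C hCc hCr⟩,
        (sortPerm_buildF hj σ C hCc hCa).symm⟩
    · intro f hf
      rw [mem_filter, mem_filter] at hf
      obtain ⟨⟨-, hsurj⟩, hσ⟩ := hf
      subst hσ
      exact buildF_reconstruct hn hj hsurj
    · intro C hC
      simp only [mem_filter, mem_powersetCard] at hC
      exact cSet_buildF hj σ C hC.1.2 hC.1.1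
  by_cases hcase : (aSet n σ).card ≤ j - 1
  · rw [hmain, card_between _ _ hsub _ hcase, card_range, hacard]
    have h1 : (n - 1 - ascentCount n σ) - (j - 1 - ascentCount n σ) = n - j := by
      rw [hacard] at hcase
      omega
    rw [← h1, Nat.choose_symm (by omega)]
  · rw [hmain]
    have hempty : (((range (n - 1)).powersetCard (j - 1)).filter fun C => aSet n σ ⊆ C) = ∅ := by
      rw [eq_empty_iff_forall_notMem]
      intro C hC
      simp only [mem_filter, mem_powersetCard] at hC
      exact hcase (hC.1.2 ▸ card_le_card hC.2)
    rw [hempty, card_empty]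
    symm
    apply Nat.choose_eq_zero_of_lt
    rw [hacard] at hcase
    omega

lemma lemB (hn : 1 ≤ n) (hj : 0 < j) (hjn : j ≤ n) :
    ((univ : Finset (Fin n → Fin j)).filter fun f => Surjective f).card
      = ∑ a ∈ range n, eulerianNumber n a * (n - 1 - a).choose (n - j) := by
  rw [card_eq_sum_card_fiberwise (f := sortPerm) (t := univ) (fun x _ => mem_univ _)]
  rw [sum_congr rfl (fun σ _ => fiber_card hn hj hjn σ)]
  rw [← sum_fiberwise_of_maps_to (g := fun σ : Equiv.Perm (Fin n) => ascentCount n σ)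
    (t := range n) (fun σ _ => by simp only [mem_range]; have := ascentCount_le (n := n) σ; omega)
    (fun σ => (n - 1 - ascentCount n σ).choose (n - j))]
  apply sum_congr rfl
  intro a _
  rw [eulerianNumber]
  rw [sum_congr rfl (fun σ hσ => by rw [(mem_filter.1 hσ).2])]
  rw [sum_const, smul_eq_mul]

instance : DecidableEq (Finpartition (univ : Finset (Fin n))) := fun P Q =>
  decidable_of_iff (P.parts = Q.parts) ⟨fun h => Finpartition.ext h, fun h => by rw [h]⟩

instance kerDec (f : Fin n → Fin j) : DecidableRel (Setoid.ker f).r := fun a b =>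
  decidable_of_iff (f a = f b) Iff.rfl

def fpart (f : Fin n → Fin j) : Finpartition (univ : Finset (Fin n)) :=
  Finpartition.ofSetoid (Setoid.ker f)

lemma mem_part_fpart {f : Fin n → Fin j} {x y : Fin n} :
    y ∈ (fpart f).part x ↔ f x = f y :=
  Iff.trans Finpartition.mem_part_ofSetoid_iff_rel Iff.rfl

lemma part_ext_aux {P Q : Finpartition (univ : Finset (Fin n))}
    (h : ∀ x, P.part x = Q.part x) {t : Finset (Fin n)} (ht : t ∈ P.parts) : t ∈ Q.parts := by
  obtain ⟨x, hx⟩ := P.nonempty_of_mem_parts ht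
  have h1 : P.part x = t := P.part_eq_of_mem ht hx
  rw [← h1, h x]
  exact Q.part_mem.2 (mem_univ x)

lemma part_ext {P Q : Finpartition (univ : Finset (Fin n))}
    (h : ∀ x, P.part x = Q.part x) : P = Q := by
  apply Finpartition.ext
  ext t
  exact ⟨part_ext_aux h, part_ext_aux (fun x => (h x).symm)⟩

lemma partsE {f : Fin n → Fin j} (hf : Surjective f) {P : Finpartition (univ : Finset (Fin n))}
    (hP : fpart f = P) :
    ∃ E : {t // t ∈ P.parts} → Fin j, Bijective E ∧ ∀ (t : {t // t ∈ P.parts}) x,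
      x ∈ t.1 → E t = f x := by
  have hprop : ∀ (t : {t // t ∈ P.parts}) x, x ∈ t.1 →
      f ((t : Finset (Fin n)).min' (P.nonempty_of_mem_parts t.2)) = f x := by
    intro t x hx
    have hxt : t.1 = P.part x := (P.part_eq_of_mem t.2 hx).symm
    have hmin : (t : Finset (Fin n)).min' (P.nonempty_of_mem_parts t.2) ∈ P.part x := by
      rw [← hxt]
      exact min'_mem _ _
    have hparts : (fpart f).part x = P.part x := by rw [hP]
    rw [← hparts] at hmin
    exact (mem_part_fpart.1 hmin).symm
  refine ⟨fun t => f ((t : Finset (Fin n)).min' (P.nonempty_of_mem_parts t.2)), ⟨?_, ?_⟩, hprop⟩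
  · intro t t' hE
    set mt := (t : Finset (Fin n)).min' (P.nonempty_of_mem_parts t.2) with hmt
    set mt' := (t' : Finset (Fin n)).min' (P.nonempty_of_mem_parts t'.2) with hmt'
    have h1 : mt' ∈ (fpart f).part mt := mem_part_fpart.2 hE
    rw [hP] at h1
    have h2 : P.part mt = t.1 := P.part_eq_of_mem t.2 (min'_mem _ _)
    rw [h2] at h1
    exact Subtype.ext (P.eq_of_mem_parts t.2 t'.2 h1 (min'_mem _ _))
  · intro i
    obtain ⟨x, hx⟩ := hf i
    refine ⟨⟨P.part x, P.part_mem.2 (mem_univ x)⟩, ?_⟩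
    exact (hprop ⟨P.part x, P.part_mem.2 (mem_univ x)⟩ x (P.mem_part (mem_univ x))).trans hx

lemma parts_card_of_surj {f : Fin n → Fin j} (hf : Surjective f)
    {P : Finpartition (univ : Finset (Fin n))} (hP : fpart f = P) : P.parts.card = j := by
  obtain ⟨E, hE, -⟩ := partsE hf hP
  have := Fintype.card_of_bijective hE
  rw [Fintype.card_coe, Fintype.card_fin] at this
  exact this

lemma fiber_card_stirling (P : Finpartition (univ : Finset (Fin n))) :
    (((univ : Finset (Fin n → Fin j)).filter fun f => Surjective f).filter
      fun f => fpart f = P).card = if P.parts.card = j then j ! else 0 := by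
  split_ifs with h
  · have hcardeq : ((univ : Finset ({t // t ∈ P.parts} ≃ Fin j))).card = j ! := by
      rw [Finset.card_univ,
        Fintype.card_equiv (Fintype.equivFinOfCardEq (by rw [Fintype.card_coe]; exact h)),
        Fintype.card_coe, h]
    rw [← hcardeq]
    symm
    apply Finset.card_bij (fun e _ => fun x => e ⟨P.part x, P.part_mem.2 (mem_univ x)⟩)
    · intro e _
      rw [mem_filter, mem_filter]
      refine ⟨⟨mem_univ _, ?_⟩, ?_⟩
      · intro i
        obtain ⟨x, hx⟩ := P.nonempty_of_mem_parts (e.symm i).2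
        refine ⟨x, ?_⟩
        have h2 : (⟨P.part x, P.part_mem.2 (mem_univ x)⟩ : {t // t ∈ P.parts}) = e.symm i :=
          Subtype.ext (P.part_eq_of_mem (e.symm i).2 hx)
        show e ⟨P.part x, P.part_mem.2 (mem_univ x)⟩ = i
        rw [h2, Equiv.apply_symm_apply]
      · apply part_ext
        intro x
        ext y
        rw [mem_part_fpart]
        constructor
        · intro he
          have h3 := e.injective he
          have hxy : P.part x = P.part y := congrArg Subtype.val h3
          rw [hxy]
          exact P.mem_part (mem_univ y)
        · intro hy
          have h4 : P.part y = P.part x := P.part_eq_of_mem (P.part_mem.2 (mem_univ x)) hy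
          exact congrArg e (Subtype.ext h4.symm)
    · intro e _ e' _ hee
      apply Equiv.ext
      intro t
      obtain ⟨x, hx⟩ := P.nonempty_of_mem_parts t.2
      have h1 : (⟨P.part x, P.part_mem.2 (mem_univ x)⟩ : {t // t ∈ P.parts}) = t :=
        Subtype.ext (P.part_eq_of_mem t.2 hx)
      calc e t = e ⟨P.part x, P.part_mem.2 (mem_univ x)⟩ := by rw [h1]
        _ = e' ⟨P.part x, P.part_mem.2 (mem_univ x)⟩ := congrFun hee x
        _ = e' t := by rw [h1]
    · intro f hfmem
      rw [mem_filter, mem_filter] at hfmem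
      obtain ⟨⟨-, hsurj⟩, hP'⟩ := hfmem
      obtain ⟨E, hE, hEprop⟩ := partsE hsurj hP'
      refine ⟨Equiv.ofBijective E hE, mem_univ _, ?_⟩
      funext x
      exact hEprop ⟨P.part x, P.part_mem.2 (mem_univ x)⟩ x (P.mem_part (mem_univ x))
  · rw [Finset.card_eq_zero, eq_empty_iff_forall_notMem]
    intro f hfmem
    rw [mem_filter, mem_filter] at hfmem
    obtain ⟨⟨-, hsurj⟩, hP'⟩ := hfmem
    exact h (parts_card_of_surj hsurj hP')

lemma lemA : ((univ : Finset (Fin n → Fin j)).filter fun f => Surjective f).card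
    = j ! * stirlingSnd n j := by
  rw [card_eq_sum_card_fiberwise (f := fpart) (t := univ) (fun x _ => mem_univ _)]
  rw [sum_congr rfl (fun P _ => fiber_card_stirling P)]
  rw [← sum_filter, sum_const, smul_eq_mul, stirlingSnd, mul_comm]

lemma chooseid (b r i : ℕ) :
    b.choose (r + i) * (r + i).choose r = b.choose r * (b - r).choose i := by
  by_cases h : r + i ≤ b
  · have := Nat.choose_mul (n := b) (Nat.le_add_right r i)
    simpa using this
  · rw [Nat.choose_eq_zero_of_lt (by omega), zero_mul]
    by_cases h2 : r ≤ b
    · rw [Nat.choose_eq_zero_of_lt (show b - r < i by omega), mul_zero]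
    · rw [Nat.choose_eq_zero_of_lt (show b < r by omega), zero_mul]

lemma inner_sum (n k b : ℕ) (hn : 1 ≤ n) (hk : k ≤ n - 1) (hb : b ≤ n - 1) :
    ∑ jj ∈ Icc 1 (k + 1), (-1 : ℤ) ^ (k + 1 - jj) * ((n - jj).choose (n - k - 1) : ℤ) *
      (b.choose (n - jj) : ℤ) = if b = n - 1 - k then 1 else 0 := by
  have hstep1 : ∑ jj ∈ Icc 1 (k + 1), (-1 : ℤ) ^ (k + 1 - jj) * ((n - jj).choose (n - k - 1) : ℤ) *
      (b.choose (n - jj) : ℤ)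
      = ∑ m ∈ Icc (n - 1 - k) (n - 1), (-1 : ℤ) ^ (m - (n - 1 - k)) * (m.choose (n - 1 - k) : ℤ) * (b.choose m : ℤ) := by
    refine sum_nbij' (fun jj => n - jj) (fun m => n - m) ?_ ?_ ?_ ?_ ?_
    · intro a ha
      simp only [mem_Icc] at ha ⊢
      omega
    · intro a ha
      simp only [mem_Icc] at ha ⊢
      omega
    · intro a ha
      simp only [mem_Icc] at ha ⊢
      omega
    · intro a ha
      simp only [mem_Icc] at ha ⊢
      omega
    · intro a ha
      rw [mem_Icc] at ha
      have e1 : k + 1 - a = n - a - (n - 1 - k) := by omega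
      have e2 : n - k - 1 = (n - 1 - k) := by omega
      rw [e1, e2]
  rw [hstep1]
  have hstep2 : ∑ m ∈ Icc (n - 1 - k) (n - 1), (-1 : ℤ) ^ (m - (n - 1 - k)) * (m.choose (n - 1 - k) : ℤ) * (b.choose m : ℤ)
      = ∑ i ∈ range (n - (n - 1 - k)), (-1 : ℤ) ^ i * (((n - 1 - k) + i).choose (n - 1 - k) : ℤ) * (b.choose ((n - 1 - k) + i) : ℤ) := by
    refine sum_nbij' (fun m => m - (n - 1 - k)) (fun i => (n - 1 - k) + i) ?_ ?_ ?_ ?_ ?_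
    · intro a ha
      simp only [mem_Icc] at ha
      simp only [mem_range]
      omega
    · intro a ha
      simp only [mem_range] at ha
      simp only [mem_Icc]
      omega
    · intro a ha
      simp only [mem_Icc] at ha ⊢
      omega
    · intro a ha
      simp only [mem_range] at ha
      omega
    · intro a ha
      rw [mem_Icc] at ha
      have e1 : (n - 1 - k) + (a - (n - 1 - k)) = a := by omega
      rw [e1]
  rw [hstep2]
  have hstep3 : ∑ i ∈ range (n - (n - 1 - k)), (-1 : ℤ) ^ i * (((n - 1 - k) + i).choose (n - 1 - k) : ℤ) * (b.choose ((n - 1 - k) + i) : ℤ)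
      = (b.choose (n - 1 - k) : ℤ) * ∑ i ∈ range (n - (n - 1 - k)), (-1 : ℤ) ^ i * ((b - (n - 1 - k)).choose i : ℤ) := by
    rw [mul_sum]
    refine sum_congr rfl fun i _ => ?_
    have := chooseid b (n - 1 - k) i
    have hcast : (((n - 1 - k) + i).choose (n - 1 - k) : ℤ) * (b.choose ((n - 1 - k) + i) : ℤ)
        = (b.choose (n - 1 - k) : ℤ) * ((b - (n - 1 - k)).choose i : ℤ) := by
      rw [← Nat.cast_mul, ← Nat.cast_mul, mul_comm (((n - 1 - k) + i).choose (n - 1 - k))]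
      exact_mod_cast congrArg (Nat.cast : ℕ → ℤ) this
    calc (-1 : ℤ) ^ i * (((n - 1 - k) + i).choose (n - 1 - k) : ℤ) * (b.choose ((n - 1 - k) + i) : ℤ)
        = (-1 : ℤ) ^ i * ((((n - 1 - k) + i).choose (n - 1 - k) : ℤ) * (b.choose ((n - 1 - k) + i) : ℤ)) := by ring
      _ = (-1 : ℤ) ^ i * ((b.choose (n - 1 - k) : ℤ) * ((b - (n - 1 - k)).choose i : ℤ)) := by rw [hcast]
      _ = (b.choose (n - 1 - k) : ℤ) * ((-1 : ℤ) ^ i * ((b - (n - 1 - k)).choose i : ℤ)) := by ring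
  rw [hstep3]
  have hsub : range (b - (n - 1 - k) + 1) ⊆ range (n - (n - 1 - k)) := by
    apply range_subset_range.2
    omega
  have hzero : ∀ x ∈ range (n - (n - 1 - k)), x ∉ range (b - (n - 1 - k) + 1) →
      (-1 : ℤ) ^ x * ((b - (n - 1 - k)).choose x : ℤ) = 0 := by
    intro x _ hx
    rw [mem_range] at hx
    rw [Nat.choose_eq_zero_of_lt (by omega), Nat.cast_zero, mul_zero]
  rw [← sum_subset hsub hzero, Int.alternating_sum_range_choose]
  rcases lt_trichotomy b (n - 1 - k) with h | h | h
  · rw [if_pos (by omega), if_neg (by omega), mul_one,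
      Nat.choose_eq_zero_of_lt h, Nat.cast_zero]
  · rw [if_pos (by omega), if_pos h, h, Nat.choose_self, mul_one, Nat.cast_one]
  · rw [if_neg (by omega), if_neg (by omega), mul_zero]

end ESAux

/-- for `n ≥ 1` and `0 ≤ k ≤ n − 1`, the Eulerian numbers and the Stirling
numbers of the second kind are related by
`A(n,k) = Σ_{j=1}^{k+1} (−1)^{k−j+1} C(n−j, n−k−1) j! S(n,j)`. -/
theorem eulerian_stirling_relation (n k : ℕ) (hn : 1 ≤ n) (hk : k ≤ n - 1) :
    ((eulerianNumber n k : ℤ)) =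
      ∑ j ∈ Finset.Icc 1 (k + 1),
        (-1 : ℤ) ^ (k + 1 - j) * ((n - j).choose (n - k - 1) : ℤ) * (j ! : ℤ) *
          (stirlingSnd n j : ℤ) := by
  have h1 : ∀ jj ∈ Finset.Icc 1 (k + 1),
      (-1 : ℤ) ^ (k + 1 - jj) * ((n - jj).choose (n - k - 1) : ℤ) * (jj ! : ℤ) *
        (stirlingSnd n jj : ℤ)
      = ∑ a ∈ Finset.range n, (eulerianNumber n a : ℤ) *
          ((-1 : ℤ) ^ (k + 1 - jj) * ((n - jj).choose (n - k - 1) : ℤ) *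
            (((n - 1 - a).choose (n - jj)) : ℤ)) := by
    intro jj hjj
    rw [Finset.mem_Icc] at hjj
    have hjn : jj ≤ n := by omega
    have hB := ESAux.lemB (n := n) (j := jj) hn (by omega) hjn
    rw [ESAux.lemA (n := n) (j := jj)] at hB
    calc (-1 : ℤ) ^ (k + 1 - jj) * ((n - jj).choose (n - k - 1) : ℤ) * (jj ! : ℤ) *
          (stirlingSnd n jj : ℤ)
        = (-1 : ℤ) ^ (k + 1 - jj) * ((n - jj).choose (n - k - 1) : ℤ) *
            ((jj ! * stirlingSnd n jj : ℕ) : ℤ) := by push_cast; ring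
      _ = (-1 : ℤ) ^ (k + 1 - jj) * ((n - jj).choose (n - k - 1) : ℤ) *
            ((∑ a ∈ Finset.range n, eulerianNumber n a * (n - 1 - a).choose (n - jj) : ℕ) : ℤ) := by
          rw [← hB]
      _ = _ := by
          push_cast
          rw [Finset.mul_sum]
          refine Finset.sum_congr rfl fun a _ => by ring
  rw [Finset.sum_congr rfl h1, Finset.sum_comm]
  have h2 : ∀ a ∈ Finset.range n,
      (∑ jj ∈ Finset.Icc 1 (k + 1), (eulerianNumber n a : ℤ) *
        ((-1 : ℤ) ^ (k + 1 - jj) * ((n - jj).choose (n - k - 1) : ℤ) *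
          (((n - 1 - a).choose (n - jj)) : ℤ)))
      = (eulerianNumber n a : ℤ) * (if a = k then 1 else 0) := by
    intro a ha
    rw [← Finset.mul_sum]
    congr 1
    rw [ESAux.inner_sum n k (n - 1 - a) hn hk (by omega)]
    rw [Finset.mem_range] at ha
    by_cases hak : a = k
    · rw [if_pos hak, if_pos (by omega)]
    · rw [if_neg hak, if_neg (by omega)]
  rw [Finset.sum_congr rfl h2]
  simp only [mul_ite, mul_one, mul_zero]
  rw [Finset.sum_ite_eq' (Finset.range n) k (fun a => (eulerianNumber n a : ℤ)),
    if_pos (Finset.mem_range.2 (by omega))]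
end
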